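/- arXiv:1510.02021 — 7 statements merged into one kernel-verified Lean document; each statement's English description precedes it below -/
import Mathlib

section
/- Let q be a prime power, let d be a positive divisor of q²−1, let r be a positive integer and φ a polynomial over F_{q²}. Let a, b, c, u, v ∈ F_{q²} satisfy a·b ≠ 0, a^{q+1} = b^{q+1} and a·c^q = b^q·c, and define f(x) = (a·x^q + b·x + c)^r · φ((a·x^q + b·x + c)^{(q²−1)/d}) + u·x^q + v·x. If b·u = a·v then f is not a permutation polynomial of F_{q²}. If b·u ≠ a·v, then f is a permutation polynomial of F_{q²} if and only if g(x) = x^r·[B·φ(x^{(q²−1)/d}) + A^{1−r}·B^{q·r}·φ(x^{(q²−1)/d})^q] + (u^{q+1} − v^{q+1})·x permutes the set S. -/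
/-!
Write `ℓ x = a x^q + b x + c` and `Z = {z | a z^q = b^q z}`. The relations `a^(q+1) = b^(q+1)` and
`a c^q = b^q c` make `ℓ` map into `Z`. A polynomial of degree `q` has at most `q` roots, so `Z` has
at most `q` elements while every fibre of `ℓ` has at most `q` of the `q²` elements; hence
`S = ℓ(F) = Z` and `ℓ` is not injective. If `b u = a v`, then `f` factors through `ℓ`. Otherwise
`ψ y = A y^q + B y + (u^(q+1) - v^(q+1)) c` also maps onto `Z`, `ψ ∘ f = g ∘ ℓ`, and `f` is
injective on the fibres of `ℓ`, so the Akbary–Ghioca–Wang criterion applies.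
-/

open Function Polynomial

section

variable {F : Type*} [Field F] {q : ℕ}

section Frobenius

variable [Fintype F]

theorem two_le_of_card_eq_sq (hF : Fintype.card F = q ^ 2) : 2 ≤ q := by
  have : 2 ≤ q ^ 2 := hF ▸ Fintype.one_lt_card
  by_contra! h
  interval_cases q <;> simp at this

theorem pow_pow_of_card_eq_sq (hF : Fintype.card F = q ^ 2) (x : F) : (x ^ q) ^ q = x := by
  rw [← pow_mul, ← sq, ← hF, FiniteField.pow_card]

theorem pow_succ_pow_of_card_eq_sq (hF : Fintype.card F = q ^ 2) (x : F) :
    (x ^ (q + 1)) ^ q = x ^ (q + 1) := by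
  rw [pow_succ, mul_pow, pow_pow_of_card_eq_sq hF, mul_comm]

theorem exists_charP_pow_eq_of_card_eq_sq (hF : Fintype.card F = q ^ 2) :
    ∃ p n : ℕ, CharP F p ∧ p.Prime ∧ q = p ^ n := by
  obtain ⟨k, hp, hk⟩ := FiniteField.card F (ringChar F)
  obtain ⟨n, -, hn⟩ := (Nat.dvd_prime_pow hp).mp (hk ▸ hF ▸ Dvd.intro_left _ (sq q).symm)
  exact ⟨ringChar F, n, ringChar.charP F, hp, hn⟩

theorem add_pow_of_card_eq_sq (hF : Fintype.card F = q ^ 2) (x y : F) :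
    (x + y) ^ q = x ^ q + y ^ q := by
  obtain ⟨p, n, _, hp, rfl⟩ := exists_charP_pow_eq_of_card_eq_sq hF
  have := Fact.mk hp
  exact add_pow_char_pow x y p n

theorem sub_pow_of_card_eq_sq (hF : Fintype.card F = q ^ 2) (x y : F) :
    (x - y) ^ q = x ^ q - y ^ q := by
  obtain ⟨p, n, _, hp, rfl⟩ := exists_charP_pow_eq_of_card_eq_sq hF
  have := Fact.mk hp
  exact sub_pow_char_pow x y n

end Frobenius

theorem card_filter_affine_eq_zero_le [Fintype F] [DecidableEq F] (hq : 2 ≤ q) {α : F}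
    (hα : α ≠ 0) (β γ : F) :
    (Finset.univ.filter fun x => α * x ^ q + β * x + γ = 0).card ≤ q := by
  set P : F[X] := C α * X ^ q + C β * X + C γ
  have hcoeff : P.coeff q = α := by
    simp [P, coeff_X, coeff_C, show 1 ≠ q by omega, show q ≠ 0 by omega]
  have hP : P ≠ 0 := fun h => hα (by rw [← hcoeff, h, coeff_zero])
  have hdeg : P.natDegree ≤ q := by
    refine natDegree_add_le_of_degree_le (natDegree_add_le_of_degree_le ?_ ?_) ?_ <;>
      compute_degree <;> omega
  refine le_trans (card_le_degree_of_subset_roots ?_) hdeg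
  intro x hx
  simp_all [P, mem_roots hP]

theorem le_ncard_range_affine [Fintype F] (hF : Fintype.card F = q ^ 2) {α : F} (hα : α ≠ 0)
    (β γ : F) : q ≤ (Set.range fun x => α * x ^ q + β * x + γ).ncard := by
  classical
  have hq := two_le_of_card_eq_sq hF
  have hfibre : q * q ≤ q * (Finset.univ.image fun x => α * x ^ q + β * x + γ).card := by
    rw [← sq, ← hF]
    refine Finset.card_le_mul_card_image _ _ fun y _ => ?_
    convert card_filter_affine_eq_zero_le hq hα β (γ - y) using 3
    rw [← sub_eq_zero, add_sub_assoc]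
  rw [← Set.image_univ, ← Finset.coe_univ, ← Finset.coe_image, Set.ncard_coe_finset]
  exact Nat.le_of_mul_le_mul_left hfibre (by omega)

def eigenSet (q : ℕ) (a b : F) : Set F := {z | a * z ^ q = b ^ q * z}

theorem mem_eigenSet {a b z : F} : z ∈ eigenSet q a b ↔ a * z ^ q = b ^ q * z := Iff.rfl

theorem ncard_eigenSet_le [Fintype F] (hq : 2 ≤ q) {a : F} (ha : a ≠ 0) (b : F) :
    (eigenSet q a b).ncard ≤ q := by
  classical
  convert card_filter_affine_eq_zero_le hq ha (-b ^ q) 0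
  rw [← Set.ncard_coe_finset, Finset.coe_filter]
  simp only [eigenSet, Finset.mem_univ, true_and, add_zero, neg_mul, ← sub_eq_add_neg,
    sub_eq_zero]

theorem mul_mem_eigenSet {a b c t : F} (ht : t ^ q = t) (hc : c ∈ eigenSet q a b) :
    t * c ∈ eigenSet q a b := by
  rw [mem_eigenSet] at hc ⊢
  rw [mul_pow, ht]
  linear_combination t * hc

theorem affine_mem_eigenSet [Fintype F] (hF : Fintype.card F = q ^ 2) {a b α β γ : F}
    (hβ : a * β ^ q = b ^ q * α) (hα : a * α ^ q = b ^ q * β) (hγ : γ ∈ eigenSet q a b)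
    (x : F) : α * x ^ q + β * x + γ ∈ eigenSet q a b := by
  rw [mem_eigenSet] at hγ ⊢
  rw [add_pow_of_card_eq_sq hF, add_pow_of_card_eq_sq hF, mul_pow, mul_pow,
    pow_pow_of_card_eq_sq hF]
  linear_combination x * hα + x ^ q * hβ + hγ

theorem range_affine_eq_eigenSet [Fintype F] (hF : Fintype.card F = q ^ 2) {a b α β γ : F}
    (ha : a ≠ 0) (hα : α ≠ 0) (hmaps : ∀ x, α * x ^ q + β * x + γ ∈ eigenSet q a b) :
    Set.range (fun x => α * x ^ q + β * x + γ) = eigenSet q a b :=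
  Set.eq_of_subset_of_ncard_le (Set.range_subset_iff.mpr hmaps)
    ((ncard_eigenSet_le (two_le_of_card_eq_sq hF) ha b).trans (le_ncard_range_affine hF hα β γ))

theorem affine_mem_eigenSet_self [Fintype F] (hF : Fintype.card F = q ^ 2) {a b c : F}
    (hab : a ^ (q + 1) = b ^ (q + 1)) (hc : c ∈ eigenSet q a b) (x : F) :
    a * x ^ q + b * x + c ∈ eigenSet q a b :=
  affine_mem_eigenSet hF (by ring) (by linear_combination hab) hc x

theorem not_injective_affine [Fintype F] (hF : Fintype.card F = q ^ 2) {a b c : F} (ha : a ≠ 0)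
    (hab : a ^ (q + 1) = b ^ (q + 1)) (hc : c ∈ eigenSet q a b) :
    ¬ Injective fun x => a * x ^ q + b * x + c := by
  intro hinj
  have hcard := ncard_eigenSet_le (two_le_of_card_eq_sq hF) ha b
  rw [← range_affine_eq_eigenSet hF ha ha (affine_mem_eigenSet_self hF hab hc),
    Set.ncard_range_of_injective hinj, Nat.card_eq_fintype_card, hF] at hcard
  nlinarith [two_le_of_card_eq_sq hF]

theorem not_injective_of_mul_eq [Fintype F] (hF : Fintype.card F = q ^ 2) {a b c u v : F}
    (ha : a ≠ 0) (hab : a ^ (q + 1) = b ^ (q + 1)) (hc : c ∈ eigenSet q a b)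
    (huv : b * u = a * v) (Φ : F → F) :
    ¬ Injective fun x => Φ (a * x ^ q + b * x + c) + u * x ^ q + v * x := by
  have hfactor : (fun x => Φ (a * x ^ q + b * x + c) + u * x ^ q + v * x) =
      (fun y => Φ y + u / a * (y - c)) ∘ fun x => a * x ^ q + b * x + c := by
    funext x
    simp only [Function.comp_apply]
    field_simp
    linear_combination -x * huv
  rw [hfactor]
  exact fun hinj => not_injective_affine hF ha hab hc hinj.of_comp

/-- The Akbary–Ghioca–Wang criterion. -/
theorem bijective_iff_bijOn_of_semiconj {X Y : Type*} [Finite X] {f : X → X} {g : Y → Y}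
    {ℓ ψ : X → Y} (hcomm : ∀ x, ψ (f x) = g (ℓ x)) (hrange : Set.range ψ = Set.range ℓ)
    (hfibre : ∀ x x', ℓ x = ℓ x' → f x = f x' → x = x') :
    Bijective f ↔ Set.BijOn g (Set.range ℓ) (Set.range ℓ) := by
  constructor
  · intro hf
    have hmaps : Set.MapsTo g (Set.range ℓ) (Set.range ℓ) := by
      rintro _ ⟨x, rfl⟩
      rw [← hcomm, ← hrange]
      exact Set.mem_range_self _
    refine (Set.finite_range ℓ).surjOn_iff_bijOn_of_mapsTo hmaps |>.mp ?_
    rintro s hs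
    rw [← hrange] at hs
    obtain ⟨y, rfl⟩ := hs
    obtain ⟨x, rfl⟩ := hf.surjective y
    exact ⟨ℓ x, Set.mem_range_self x, (hcomm x).symm⟩
  · intro hg
    refine Finite.injective_iff_bijective.mp fun x x' h => hfibre x x' ?_ h
    exact hg.injOn (Set.mem_range_self x) (Set.mem_range_self x') (by rw [← hcomm, ← hcomm, h])

section Coefficients

variable {a b u v A B : F}

theorem mul_pow_B_eq_of_card_eq_sq [Fintype F] (hF : Fintype.card F = q ^ 2)
    (hab : a ^ (q + 1) = b ^ (q + 1)) (hA : A = b * u - a * v) (hB : B = a * u ^ q - b * v ^ q) :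
    a * B ^ q = b ^ q * A := by
  rw [hB, hA, sub_pow_of_card_eq_sq hF, mul_pow, mul_pow, pow_pow_of_card_eq_sq hF,
    pow_pow_of_card_eq_sq hF]
  linear_combination u * hab

theorem mul_pow_A_eq_of_card_eq_sq [Fintype F] (hF : Fintype.card F = q ^ 2) (hb : b ≠ 0)
    (hab : a ^ (q + 1) = b ^ (q + 1)) (hA : A = b * u - a * v) (hB : B = a * u ^ q - b * v ^ q) :
    a * A ^ q = b ^ q * B := by
  have h := congrArg (· ^ q) (mul_pow_B_eq_of_card_eq_sq hF hab hA hB)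
  simp only [mul_pow, pow_pow_of_card_eq_sq hF] at h
  refine mul_left_cancel₀ hb ?_
  linear_combination -a * h + B * hab

theorem mul_pow_mul_eq_of_mem_eigenSet {y : F} (ha : a ≠ 0) (hA : A ≠ 0)
    (hAB : a * B ^ q = b ^ q * A) (hy : y ∈ eigenSet q a b) (r : ℕ) :
    A * y ^ (q * r) = A * (A ^ r)⁻¹ * B ^ (q * r) * y ^ r := by
  rw [mem_eigenSet] at hy
  have h : A * y ^ q = B ^ q * y :=
    mul_left_cancel₀ ha (by linear_combination A * hy - y * hAB)
  have hr : A ^ r * y ^ (q * r) = B ^ (q * r) * y ^ r := by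
    simpa only [mul_pow, ← pow_mul] using congrArg (· ^ r) h
  field_simp
  linear_combination hr

end Coefficients

theorem semiconj_affine [Fintype F] (hF : Fintype.card F = q ^ 2) {a b c u v A B : F}
    (ha : a ≠ 0) (hA0 : A ≠ 0) (hab : a ^ (q + 1) = b ^ (q + 1)) (hc : c ∈ eigenSet q a b)
    (hA : A = b * u - a * v) (hB : B = a * u ^ q - b * v ^ q) (Φ : F → F) (r : ℕ) {x y : F}
    (hy : a * x ^ q + b * x + c = y) :
    A * (y ^ r * Φ y + u * x ^ q + v * x) ^ q + B * (y ^ r * Φ y + u * x ^ q + v * x) +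
        (u ^ (q + 1) - v ^ (q + 1)) * c =
      y ^ r * (B * Φ y + A * (A ^ r)⁻¹ * B ^ (q * r) * Φ y ^ q) +
        (u ^ (q + 1) - v ^ (q + 1)) * y := by
  have hy_mem : y ∈ eigenSet q a b := hy ▸ affine_mem_eigenSet_self hF hab hc x
  have key := mul_pow_mul_eq_of_mem_eigenSet ha hA0 (mul_pow_B_eq_of_card_eq_sq hF hab hA hB)
    hy_mem r
  rw [add_pow_of_card_eq_sq hF, add_pow_of_card_eq_sq hF, mul_pow, mul_pow, mul_pow,
    pow_pow_of_card_eq_sq hF, ← pow_mul']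
  linear_combination Φ y ^ q * key + (u ^ q * x + v ^ q * x ^ q) * hA +
    (u * x ^ q + v * x) * hB + (u ^ (q + 1) - v ^ (q + 1)) * hy

theorem eq_of_affine_eq {a b c u v : F} (huv : b * u ≠ a * v) (Φ : F → F) {x x' : F}
    (h₁ : a * x ^ q + b * x + c = a * x' ^ q + b * x' + c)
    (h₂ : Φ (a * x ^ q + b * x + c) + u * x ^ q + v * x =
      Φ (a * x' ^ q + b * x' + c) + u * x' ^ q + v * x') : x = x' := by
  rw [h₁] at h₂
  have h : (b * u - a * v) * (x - x') = 0 := by linear_combination u * h₁ - a * h₂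
  exact sub_eq_zero.mp ((mul_eq_zero.mp h).resolve_left (sub_ne_zero.mpr huv))

end

theorem stmt_0_general {F : Type*} [Field F] [Fintype F]
    (q : ℕ) (hF : Fintype.card F = q ^ 2)
    (d : ℕ)
    (r : ℕ) (φ : Polynomial F)
    (a b c u v : F) (hab : a * b ≠ 0)
    (hab1 : a ^ (q + 1) = b ^ (q + 1)) (hac : a * c ^ q = b ^ q * c)
    (A B : F) (hA : A = b * u - a * v) (hB : B = a * u ^ q - b * v ^ q)
    (S : Set F) (hS : S = {y : F | ∃ x : F, a * x ^ q + b * x + c = y})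
    (f g : F → F)
    (hf : f = fun x => (a * x ^ q + b * x + c) ^ r *
      φ.eval ((a * x ^ q + b * x + c) ^ ((q ^ 2 - 1) / d)) + u * x ^ q + v * x)
    (hg : g = fun x => x ^ r * (B * φ.eval (x ^ ((q ^ 2 - 1) / d)) +
      A * (A ^ r)⁻¹ * B ^ (q * r) * (φ.eval (x ^ ((q ^ 2 - 1) / d))) ^ q) +
      (u ^ (q + 1) - v ^ (q + 1)) * x) :
    (b * u = a * v → ¬ Function.Bijective f) ∧
    (b * u ≠ a * v → (Function.Bijective f ↔ Set.BijOn g S S)) := by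
  obtain ⟨ha, hb⟩ := mul_ne_zero_iff.mp hab
  have hc : c ∈ eigenSet q a b := hac
  subst hf hg hS
  refine ⟨fun huv hf => not_injective_of_mul_eq hF ha hab1 hc huv
    (fun y => y ^ r * φ.eval (y ^ ((q ^ 2 - 1) / d))) hf.injective, fun huv => ?_⟩
  have hA0 : A ≠ 0 := hA ▸ sub_ne_zero.mpr huv
  have ht : (u ^ (q + 1) - v ^ (q + 1)) ^ q = u ^ (q + 1) - v ^ (q + 1) := by
    rw [sub_pow_of_card_eq_sq hF, pow_succ_pow_of_card_eq_sq hF, pow_succ_pow_of_card_eq_sq hF]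
  have hψ := range_affine_eq_eigenSet hF (β := B) (γ := (u ^ (q + 1) - v ^ (q + 1)) * c) ha hA0
    (affine_mem_eigenSet hF (mul_pow_B_eq_of_card_eq_sq hF hab1 hA hB)
      (mul_pow_A_eq_of_card_eq_sq hF hb hab1 hA hB) (mul_mem_eigenSet ht hc))
  have hℓ := range_affine_eq_eigenSet hF ha ha (affine_mem_eigenSet_self hF hab1 hc)
  exact bijective_iff_bijOn_of_semiconj
    (fun x => semiconj_affine hF ha hA0 hab1 hc hA hB
      (fun y => φ.eval (y ^ ((q ^ 2 - 1) / d))) r rfl) (hψ.trans hℓ.symm)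
    (fun x x' h₁ h₂ => eq_of_affine_eq huv
      (fun y => y ^ r * φ.eval (y ^ ((q ^ 2 - 1) / d))) h₁ h₂)

theorem stmt_0 {F : Type*} [Field F] [Fintype F]
    (q : ℕ) (hq : IsPrimePow q) (hF : Fintype.card F = q ^ 2)
    (d : ℕ) (hd0 : 0 < d) (hdvd : d ∣ q ^ 2 - 1)
    (r : ℕ) (hr : 0 < r) (φ : Polynomial F)
    (a b c u v : F) (hab : a * b ≠ 0)
    (hab1 : a ^ (q + 1) = b ^ (q + 1)) (hac : a * c ^ q = b ^ q * c)
    (A B : F) (hA : A = b * u - a * v) (hB : B = a * u ^ q - b * v ^ q)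
    (S : Set F) (hS : S = {y : F | ∃ x : F, a * x ^ q + b * x + c = y})
    (f g : F → F)
    (hf : f = fun x => (a * x ^ q + b * x + c) ^ r *
      φ.eval ((a * x ^ q + b * x + c) ^ ((q ^ 2 - 1) / d)) + u * x ^ q + v * x)
    (hg : g = fun x => x ^ r * (B * φ.eval (x ^ ((q ^ 2 - 1) / d)) +
      A * (A ^ r)⁻¹ * B ^ (q * r) * (φ.eval (x ^ ((q ^ 2 - 1) / d))) ^ q) +
      (u ^ (q + 1) - v ^ (q + 1)) * x) :
    (b * u = a * v → ¬ Function.Bijective f) ∧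
    (b * u ≠ a * v → (Function.Bijective f ↔ Set.BijOn g S S)) :=
  stmt_0_general q hF d r φ a b c u v hab hab1 hac A B hA hB S hS f g hf hg
end

section
/- Let q be a prime power and let d ≥ 3 be an odd divisor of q−1. Let a, b, c ∈ F_{q²} satisfy a·b ≠ 0, a^{q+1} = b^{q+1} and a·c^q = b^q·c, and assume b·u ≠ a·v. Let u, v ∈ F_{q²} and the positive integer r satisfy either (u^{q+1} = v^{q+1} and gcd(r, (q²−1)/d) = 1) or (u^{q+1} ≠ v^{q+1} and r = 1). Let φ be a polynomial over F_{q²} and define f(x) = (a·x^q + b·x + c)^r · φ((a·x^q + b·x + c)^{(q²−1)/d}) + u·x^q + v·x. Then f is a permutation polynomial of F_{q²} if and only if h(x) = x^r·[B·φ(x) + A^{1−r}·B^{q·r}·φ(x)^q + u^{q+1} − v^{q+1}]^{(q²−1)/d} permutes U_d. -/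
/-!
Let `σ x = x ^ q`, `ω = σ b / a`, `γ = u ^ (q + 1) - v ^ (q + 1)` and `e = (q ^ 2 - 1) / d`.
Everything happens on the `F_q`-line `K = {y | σ y = ω * y}`: both `G x = a σ x + b x + c` and
`Λ y = A σ y + B y + γ c` map `F_{q²}` onto `K`, and `Λ (f x) = η (G x)` with
`η y = y ^ r Φ (y ^ e)`, where `h z = z ^ r Φ z ^ e` (using `γ G = γ G ^ r`).
As `A ≠ 0`, `x` is determined by `G x` and `f x`, so `f` permutes `F_{q²}` iff `η` permutes `K`.
Finally `y ↦ y ^ e` maps `K \ {0}` onto `U_d` and turns `η` into `h`, while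
`gcd (r, e) = 1` separates the points of `K` with the same `e`-th power; hence `η` permutes `K`
iff `h` permutes `U_d`.
-/

open Function Set Polynomial

theorem mapsTo_of_comp_eq {α β : Type*} {f : α → α} {G Λ : α → β} {η : β → β} {K : Set β}
    (hG : range G = K) (hΛ : range Λ = K) (hcomm : ∀ x, η (G x) = Λ (f x)) :
    MapsTo η K K := by
  intro k hk
  obtain ⟨x, rfl⟩ := hG ▸ hk
  exact hΛ ▸ ⟨f x, (hcomm x).symm⟩

theorem bijective_iff_bijOn_of_comp_eq {α β : Type*} [Finite α] {f : α → α} {G Λ : α → β}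
    {η : β → β} {K : Set β} (hG : range G = K) (hΛ : range Λ = K)
    (hcomm : ∀ x, η (G x) = Λ (f x)) (hinj : ∀ x y, G x = G y → f x = f y → x = y) :
    Bijective f ↔ BijOn η K K := by
  have hGK : ∀ x, G x ∈ K := fun x => hG ▸ mem_range_self x
  constructor
  · intro hf
    refine ((hG ▸ finite_range G).surjOn_iff_bijOn_of_mapsTo
      (mapsTo_of_comp_eq hG hΛ hcomm)).1 ?_
    intro k hk
    obtain ⟨y, rfl⟩ := hΛ ▸ hk
    obtain ⟨x, rfl⟩ := hf.2 y
    exact ⟨G x, hGK x, hcomm x⟩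
  · intro hη
    refine Finite.injective_iff_bijective.1 fun x y hxy => hinj x y ?_ hxy
    exact hη.injOn (hGK x) (hGK y) (by rw [hcomm, hcomm, hxy])

theorem bijOn_pow_mul_iff_bijOn_image_pow {F : Type*} [CommGroupWithZero F] [Finite F]
    {K U : Set F} {r e : ℕ} (Φ : F → F) (hr : 0 < r) (he : 0 < e) (hK0 : 0 ∈ K)
    (hKU : (· ^ e) '' (K \ {0}) = U) (hre : r.Coprime e)
    (hmaps : MapsTo (fun y => y ^ r * Φ (y ^ e)) K K) :
    BijOn (fun y => y ^ r * Φ (y ^ e)) K K ↔ BijOn (fun z => z ^ r * Φ z ^ e) U U := by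
  set η := fun y => y ^ r * Φ (y ^ e)
  set h := fun z => z ^ r * Φ z ^ e
  have hpow : ∀ y, h (y ^ e) = η y ^ e := fun y => by
    simp only [h, η, mul_pow, ← pow_mul, mul_comm r e]
  have hη0 : η 0 = 0 := by simp [η, hr.ne']
  have hmemU : ∀ y ∈ K, y ≠ 0 → y ^ e ∈ U := fun y hy hy0 =>
    hKU ▸ mem_image_of_mem _ ⟨hy, hy0⟩
  have hU0 : ∀ z ∈ U, z ≠ 0 := fun z hz => by
    obtain ⟨y, ⟨-, hy0⟩, rfl⟩ := hKU ▸ hz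
    exact pow_ne_zero e hy0
  constructor
  · intro hη
    have hηne : ∀ y ∈ K, y ≠ 0 → η y ≠ 0 := fun y hy hy0 hηy =>
      hy0 (hη.injOn hy hK0 (hηy.trans hη0.symm))
    have hmapsU : MapsTo h U U := fun z hz => by
      obtain ⟨y, ⟨hy, hy0⟩, rfl⟩ := hKU ▸ hz
      rw [hpow]
      exact hmemU _ (hη.mapsTo hy) (hηne y hy hy0)
    refine ((toFinite U).surjOn_iff_bijOn_of_mapsTo hmapsU).1 fun w hw => ?_
    obtain ⟨y', ⟨hy', hy'0⟩, rfl⟩ := hKU ▸ hw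
    obtain ⟨y, hy, rfl⟩ := hη.surjOn hy'
    have hy0 : y ≠ 0 := by rintro rfl; exact hy'0 hη0
    exact ⟨y ^ e, hmemU y hy hy0, hpow y⟩
  · intro hh
    have hηne : ∀ y ∈ K, y ≠ 0 → η y ≠ 0 := fun y hy hy0 =>
      (pow_ne_zero_iff he.ne').1 (hpow y ▸ hU0 _ (hh.mapsTo (hmemU y hy hy0)))
    refine ((toFinite K).injOn_iff_bijOn_of_mapsTo hmaps).1 ?_
    intro y₁ hy₁ y₂ hy₂ heq
    by_cases hy₁0 : y₁ = 0
    · by_contra hne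
      exact hηne y₂ hy₂ (hy₁0 ▸ Ne.symm hne) (heq ▸ hy₁0 ▸ hη0)
    by_cases hy₂0 : y₂ = 0
    · exact absurd (heq.trans (hy₂0 ▸ hη0)) (hηne y₁ hy₁ hy₁0)
    have hpe : y₁ ^ e = y₂ ^ e :=
      hh.injOn (hmemU y₁ hy₁ hy₁0) (hmemU y₂ hy₂ hy₂0) (by rw [hpow, hpow, heq])
    have hpr : y₁ ^ r = y₂ ^ r := by
      have hΦ0 : Φ (y₁ ^ e) ≠ 0 := right_ne_zero_of_mul (hηne y₁ hy₁ hy₁0)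
      exact mul_right_cancel₀ hΦ0 (heq.trans (by simp only [η, hpe]))
    refine (div_eq_one_iff_eq hy₂0).1 ((pow_eq_one_iff_of_coprime hre).1 ⟨?_, ?_⟩)
    · rw [div_pow, hpr, div_self (pow_ne_zero r hy₂0)]
    · rw [div_pow, hpe, div_self (pow_ne_zero e hy₂0)]

namespace FiniteField

variable {F : Type*} [Field F] [Fintype F]

theorem exists_ringHom_eq_pow {q : ℕ} (hq : IsPrimePow q) (hF : Fintype.card F = q ^ 2) :
    ∃ σ : F →+* F, ∀ x, σ x = x ^ q := by
  obtain ⟨p, k, hp, -, rfl⟩ := hq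
  have hp := hp.nat_prime
  have : Fact p.Prime := ⟨hp⟩
  have : CharP F p := by
    obtain ⟨p', hchar⟩ := CharP.exists F
    obtain ⟨n, hp', hcard⟩ := FiniteField.card F p'
    have hdvd : p' ∣ p ^ (k * 2) := by
      rw [pow_mul, ← hF, hcard]; exact dvd_pow_self p' n.ne_zero
    rwa [(Nat.prime_dvd_prime_iff_eq hp' hp).1 (hp'.dvd_of_dvd_pow hdvd)] at hchar
  exact ⟨iterateFrobenius F p k, fun x => rfl⟩

theorem one_lt_of_card_eq_sq {q : ℕ} (hF : Fintype.card F = q ^ 2) : 1 < q :=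
  (Nat.one_lt_pow_iff two_ne_zero).1 (hF ▸ Fintype.one_lt_card)

theorem exists_pow_ne_self {q : ℕ} (hF : Fintype.card F = q ^ 2) : ∃ t : F, t ^ q ≠ t := by
  classical
  by_contra! h
  have hq := one_lt_of_card_eq_sq hF
  have hroots : (Finset.univ : Finset F).val ⊆ (X ^ q - X : F[X]).roots := fun x _ => by
    simp [mem_roots (X_pow_card_sub_X_ne_zero F hq), h x]
  have := card_le_degree_of_subset_roots hroots
  rw [Finset.card_univ, hF, FiniteField.X_pow_card_sub_X_natDegree_eq F hq] at this
  nlinarith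

theorem exists_pow_eq_of_pow_eq_one {d e : ℕ} (hde : d * e = Fintype.card F - 1) {z : F}
    (hz : z ^ d = 1) : ∃ x : F, x ^ e = z := by
  classical
  have hde0 : d * e ≠ 0 := by have := Fintype.one_lt_card (α := F); omega
  have : NeZero d := ⟨left_ne_zero_of_mul hde0⟩
  obtain ⟨g, hg⟩ := IsCyclic.exists_ofOrder_eq_natCard (α := Fˣ)
  have hprim : IsPrimitiveRoot (g : F) (e * d) := by
    rw [IsPrimitiveRoot.coe_units_iff, mul_comm, hde, ← Fintype.card_units,
      ← Nat.card_eq_fintype_card, ← hg]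
    exact IsPrimitiveRoot.orderOf g
  obtain ⟨i, -, hi⟩ :=
    (hprim.pow (Nat.pos_of_ne_zero (mul_comm d e ▸ hde0)) rfl).eq_pow_of_pow_eq_one hz
  exact ⟨(g : F) ^ i, by rw [← hi, ← pow_mul, ← pow_mul, mul_comm]⟩

theorem exists_pow_eq_self_and_pow_eq {q d e : ℕ} (hF : Fintype.card F = q ^ 2) (hd : Odd d)
    (hdq : d ∣ q - 1) (hde : d * e = q ^ 2 - 1) {z : F} (hz : z ^ d = 1) :
    ∃ τ : F, τ ^ q = τ ∧ τ ^ e = z := by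
  -- As `d` is odd, `z` has a square root `w` in `U_d`; for any `e`-th root `x` of `w`, the norm
  -- `x ^ (q + 1)` lies in `F_q` and has `e`-th power `w ^ (q + 1) = w ^ 2 = z`.
  obtain ⟨m, rfl⟩ := hd
  set w := z ^ (m + 1)
  have hwd : w ^ (2 * m + 1) = 1 := by rw [← pow_mul, mul_comm, pow_mul, hz, one_pow]
  have hw2 : w ^ 2 = z := by
    rw [← pow_mul, show (m + 1) * 2 = (2 * m + 1) + 1 by ring, pow_succ, hz, one_mul]
  obtain ⟨x, hx⟩ := exists_pow_eq_of_pow_eq_one (hF ▸ hde) hwd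
  have hq := one_lt_of_card_eq_sq hF
  refine ⟨x ^ (q + 1), ?_, ?_⟩
  · rw [← pow_mul, add_one_mul, pow_add, ← sq, ← hF, pow_card, ← pow_succ']
  · obtain ⟨s, hs⟩ := hdq
    rw [← pow_mul, mul_comm, pow_mul, hx, show q + 1 = (q - 1) + 2 by omega, pow_add, hs,
      pow_mul, hwd, one_pow, one_mul, hw2]

end FiniteField

section Conjugation

variable {F : Type*} [Field F]

def eigenLine (σ : F →+* F) (ω : F) : AddSubgroup F where
  carrier := {y | σ y = ω * y}
  add_mem' {x y} hx hy := by simp_all [mul_add]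
  zero_mem' := by simp
  neg_mem' {x} hx := by simp_all

variable {σ : F →+* F}

@[simp] theorem mem_eigenLine {ω y : F} : y ∈ eigenLine σ ω ↔ σ y = ω * y := Iff.rfl

theorem mul_map_eq_one_of_map_eq (hσ : Involutive σ) {ω α β : F} (hα0 : α ≠ 0)
    (hα : σ α = ω * β) (hβ : σ β = ω * α) : ω * σ ω = 1 := by
  have h := hσ α
  rw [hα, map_mul, hβ] at h
  exact mul_right_cancel₀ hα0 (by linear_combination h)

theorem range_eq_eigenLine (hσ : Involutive σ) (hσt : ∃ t, σ t ≠ t) {ω α β κ : F} (hα0 : α ≠ 0)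
    (hα : σ α = ω * β) (hβ : σ β = ω * α) (hκ : κ ∈ eigenLine σ ω) :
    range (fun x => α * σ x + β * x + κ) = eigenLine σ ω := by
  have hω := mul_map_eq_one_of_map_eq hσ hα0 hα hβ
  rw [mem_eigenLine] at hκ
  ext m
  constructor
  · rintro ⟨x, rfl⟩
    simp only [SetLike.mem_coe, mem_eigenLine, map_add, map_mul, hσ x, hα, hβ, hκ]
    ring
  · intro hm
    rw [SetLike.mem_coe, mem_eigenLine] at hm
    set T := fun s => α * ω * σ s + β * s with hT
    have hTσ : ∀ s, σ (T s) = T s := fun s => by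
      simp only [hT, map_add, map_mul, hα, hβ, hσ s]
      linear_combination β * s * hω
    obtain ⟨s, hs⟩ : ∃ s, T s ≠ 0 := by
      by_contra! h
      obtain ⟨t, ht⟩ := hσt
      have h1 := h 1
      have h2 := h t
      simp only [hT, map_one, mul_one] at h1 h2
      have hω0 : ω ≠ 0 := left_ne_zero_of_mul_eq_one hω
      have : α * ω * (σ t - t) = 0 := by linear_combination h2 - t * h1
      exact ht (sub_eq_zero.1 ((mul_eq_zero.1 this).resolve_left (mul_ne_zero hα0 hω0)))
    -- `T` is `F_q`-linear, so `T (s / T s) = 1`; scaling by `m - κ` gives the preimage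
    refine ⟨(m - κ) * s / T s, ?_⟩
    simp only [map_div₀, map_mul, map_sub, hTσ s, hm, hκ]
    simp only [hT] at hs ⊢
    field_simp
    ring

theorem image_pow_eigenLine [Fintype F] {q d e : ℕ} (hF : Fintype.card F = q ^ 2)
    (hσq : ∀ x, σ x = x ^ q) {ω : F} (hω : ω * σ ω = 1) (hd : Odd d) (hdq : d ∣ q - 1)
    (hde : d * e = q ^ 2 - 1) :
    (· ^ e) '' (eigenLine σ ω \ {0} : Set F) = {z | z ^ d = 1} := by
  have hq := FiniteField.one_lt_of_card_eq_sq hF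
  ext z
  constructor
  · rintro ⟨y, ⟨-, hy0⟩, rfl⟩
    rw [mem_ofPred_eq, ← pow_mul, mul_comm, hde, ← hF]
    exact FiniteField.pow_card_sub_one_eq_one y hy0
  · intro hz
    have hz0 : z ≠ 0 := by rintro rfl; simp [hd.pos.ne'] at hz
    have he0 : e ≠ 0 := by
      rintro rfl
      have := Nat.one_lt_pow two_ne_zero hq
      omega
    -- Hilbert 90: `ω = α ^ (q - 1)` for some `α`, and such an `α` spans the line
    obtain ⟨α, hα⟩ := FiniteField.exists_pow_eq_of_pow_eq_one (d := q + 1) (e := q - 1)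
      (by rw [hF, ← one_pow 2, Nat.sq_sub_sq, one_pow]) (by rw [pow_succ', ← hσq, hω])
    have hα0 : α ≠ 0 := by
      rintro rfl
      rw [zero_pow (by omega)] at hα
      simp [← hα] at hω
    have hαK : σ α = ω * α := by rw [hσq, ← hα, ← pow_succ, Nat.sub_add_cancel hq.le]
    obtain ⟨τ, hτq, hτe⟩ := FiniteField.exists_pow_eq_self_and_pow_eq hF hd hdq hde
      (z := z / α ^ e) (by
        rw [div_pow, hz, ← pow_mul, mul_comm, hde, ← hF,
          FiniteField.pow_card_sub_one_eq_one α hα0, div_one])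
    have hy : (α * τ) ^ e = z := by rw [mul_pow, hτe]; field_simp
    refine ⟨α * τ, ⟨?_, fun h0 => hz0 ?_⟩, hy⟩
    · rw [SetLike.mem_coe, mem_eigenLine, map_mul, hαK, hσq τ, hτq, mul_assoc]
    · rw [← hy, mem_singleton_iff.1 h0, zero_pow he0]

theorem mul_map_add_mul_add_mul_eq (hσ : Involutive σ) {a b c u v ω A B : F}
    (ha : σ a = ω * b) (hb : σ b = ω * a) (hc : σ c = ω * c) (hA : A = b * u - a * v)
    (hB : B = a * σ u - b * σ v) {r : ℕ} (hγr : u * σ u - v * σ v = 0 ∨ r = 1) (p x : F) :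
    A * σ ((a * σ x + b * x + c) ^ r * p + u * σ x + v * x)
        + B * ((a * σ x + b * x + c) ^ r * p + u * σ x + v * x) + (u * σ u - v * σ v) * c
      = (a * σ x + b * x + c) ^ r * (B * p + A * ω ^ r * σ p + (u * σ u - v * σ v)) := by
  have hG : σ (a * σ x + b * x + c) = ω * (a * σ x + b * x + c) := by
    simp only [map_add, map_mul, hσ x, ha, hb, hc]
    ring
  have hγ : (u * σ u - v * σ v) * (a * σ x + b * x + c)
      = (u * σ u - v * σ v) * (a * σ x + b * x + c) ^ r := by
    rcases hγr with h | rfl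
    · rw [h, zero_mul, zero_mul]
    · rw [pow_one]
  rw [map_add, map_add, map_mul, map_pow, hG]
  simp only [map_mul, hσ x, hA, hB, mul_pow]
  linear_combination hγ

theorem bijective_iff_bijOn_of_image_pow_eigenLine [Finite F] (hσ : Involutive σ)
    (hσt : ∃ t, σ t ≠ t) {a b c u v ω A B : F} (ha0 : a ≠ 0) (ha : σ a = ω * b)
    (hb : σ b = ω * a) (hc : σ c = ω * c) (hA0 : A ≠ 0) (hA : A = b * u - a * v)
    (hB : B = a * σ u - b * σ v) {r e : ℕ} (hr : 0 < r) (he : 0 < e)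
    (hγr : u * σ u - v * σ v = 0 ∨ r = 1) (hre : r.Coprime e)
    {U : Set F} (hKU : (· ^ e) '' (eigenLine σ ω \ {0} : Set F) = U) (P : F → F) :
    Bijective (fun x => (a * σ x + b * x + c) ^ r * P ((a * σ x + b * x + c) ^ e)
        + u * σ x + v * x) ↔
      BijOn (fun z => z ^ r * (B * P z + A * (A ^ r)⁻¹ * σ B ^ r * σ (P z)
        + u * σ u - v * σ v) ^ e) U U := by
  simp only [add_sub_assoc]
  set γ := u * σ u - v * σ v
  have hσA : σ A = ω * B := by
    rw [hA, hB, map_sub, map_mul, map_mul, ha, hb]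
    ring
  have hσB : σ B = ω * A := by
    rw [hA, hB, map_sub, map_mul, map_mul, ha, hb, hσ, hσ]
    ring
  have hcoef : A * (A ^ r)⁻¹ * σ B ^ r = A * ω ^ r := by
    rw [hσB, mul_pow]
    field_simp
  rw [hcoef]
  have hγc : γ * c ∈ eigenLine σ ω := by
    rw [mem_eigenLine, map_mul, hc]
    simp only [γ, map_sub, map_mul, hσ u, hσ v]
    ring
  have hG := range_eq_eigenLine hσ hσt ha0 ha hb hc
  have hΛ := range_eq_eigenLine hσ hσt hA0 hσA hσB hγc
  have hcomm := fun x => (mul_map_add_mul_add_mul_eq hσ ha hb hc hA hB hγr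
    (P ((a * σ x + b * x + c) ^ e)) x).symm
  have hinj : ∀ x y, a * σ x + b * x + c = a * σ y + b * y + c →
      (a * σ x + b * x + c) ^ r * P ((a * σ x + b * x + c) ^ e) + u * σ x + v * x =
        (a * σ y + b * y + c) ^ r * P ((a * σ y + b * y + c) ^ e) + u * σ y + v * y → x = y := by
    intro x y hGxy hfxy
    rw [hGxy] at hfxy
    have h₁ : a * σ (x - y) + b * (x - y) = 0 := by rw [map_sub]; linear_combination hGxy
    have h₂ : u * σ (x - y) + v * (x - y) = 0 := by rw [map_sub]; linear_combination hfxy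
    have h₃ : A * (x - y) = 0 := by rw [hA]; linear_combination u * h₁ - a * h₂
    exact sub_eq_zero.1 ((mul_eq_zero.1 h₃).resolve_left hA0)
  set Φ := fun z => B * P z + A * ω ^ r * σ (P z) + γ
  rw [bijective_iff_bijOn_of_comp_eq (η := fun y => y ^ r * Φ (y ^ e)) hG hΛ hcomm hinj]
  exact bijOn_pow_mul_iff_bijOn_image_pow Φ hr he (zero_mem _) hKU hre
    (mapsTo_of_comp_eq hG hΛ hcomm)

end Conjugation

theorem stmt_2_general {F : Type*} [Field F] [Fintype F]
    (q : ℕ) (hq : IsPrimePow q) (hF : Fintype.card F = q ^ 2)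
    (d : ℕ) (hdodd : Odd d) (hdvd : d ∣ q - 1)
    (a b c u v : F) (hab : a * b ≠ 0)
    (hab1 : a ^ (q + 1) = b ^ (q + 1)) (hac : a * c ^ q = b ^ q * c)
    (hA0 : b * u ≠ a * v)
    (r : ℕ) (hr : 0 < r)
    (huvr : (u ^ (q + 1) = v ^ (q + 1) ∧ Nat.gcd r ((q ^ 2 - 1) / d) = 1) ∨
      (u ^ (q + 1) ≠ v ^ (q + 1) ∧ r = 1))
    (φ : Polynomial F)
    (A B : F) (hA : A = b * u - a * v) (hB : B = a * u ^ q - b * v ^ q)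
    (f h : F → F)
    (hf : f = fun x => (a * x ^ q + b * x + c) ^ r *
      φ.eval ((a * x ^ q + b * x + c) ^ ((q ^ 2 - 1) / d)) + u * x ^ q + v * x)
    (hh : h = fun x => x ^ r * (B * φ.eval x +
      A * (A ^ r)⁻¹ * B ^ (q * r) * (φ.eval x) ^ q +
      u ^ (q + 1) - v ^ (q + 1)) ^ ((q ^ 2 - 1) / d)) :
    Function.Bijective f ↔
      Set.BijOn h {x : F | x ^ d = 1} {x : F | x ^ d = 1} := by
  obtain ⟨σ, hσq⟩ := FiniteField.exists_ringHom_eq_pow hq hF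
  have hσ : Involutive σ := fun x => by
    rw [hσq, hσq, ← pow_mul, ← sq, ← hF, FiniteField.pow_card]
  have ha0 : a ≠ 0 := left_ne_zero_of_mul hab
  set ω := σ b / a
  have hb' : σ b = ω * a := (div_mul_cancel₀ _ ha0).symm
  have ha' : σ a = ω * b := by
    rw [div_mul_eq_mul_div, eq_div_iff ha0, hσq, hσq, ← pow_succ, mul_comm, ← pow_succ', hab1]
  have hc' : σ c = ω * c := by
    rw [div_mul_eq_mul_div, eq_div_iff ha0, hσq, hσq, mul_comm, hac]
  have hγ : u ^ (q + 1) - v ^ (q + 1) = u * σ u - v * σ v := by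
    rw [hσq, hσq, pow_succ', pow_succ']
  set e := (q ^ 2 - 1) / d
  have hde : d * e = q ^ 2 - 1 := Nat.mul_div_cancel' <|
    hdvd.trans ⟨q + 1, by rw [mul_comm, ← one_pow 2, Nat.sq_sub_sq, one_pow]⟩
  have he : 0 < e := Nat.pos_of_ne_zero fun he => by
    have := Nat.one_lt_pow two_ne_zero (FiniteField.one_lt_of_card_eq_sq hF)
    rw [he, mul_zero] at hde
    omega
  subst hf hh
  simp only [← hσq, pow_mul, pow_succ']
  exact bijective_iff_bijOn_of_image_pow_eigenLine hσ
    (by simpa only [hσq] using FiniteField.exists_pow_ne_self hF) ha0 ha' hb' hc'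
    (hA ▸ sub_ne_zero.2 hA0) hA (hB.trans (by rw [hσq, hσq])) hr he
    (huvr.imp (fun h => hγ ▸ sub_eq_zero.2 h.1) And.right)
    (huvr.elim And.right fun h => h.2 ▸ Nat.coprime_one_left e)
    (image_pow_eigenLine hF hσq (mul_map_eq_one_of_map_eq hσ ha0 ha' hb') hdodd hdvd hde)
    (φ.eval ·)

theorem stmt_2 {F : Type*} [Field F] [Fintype F]
    (q : ℕ) (hq : IsPrimePow q) (hF : Fintype.card F = q ^ 2)
    (d : ℕ) (hd3 : 3 ≤ d) (hdodd : Odd d) (hdvd : d ∣ q - 1)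
    (a b c u v : F) (hab : a * b ≠ 0)
    (hab1 : a ^ (q + 1) = b ^ (q + 1)) (hac : a * c ^ q = b ^ q * c)
    (hA0 : b * u ≠ a * v)
    (r : ℕ) (hr : 0 < r)
    (huvr : (u ^ (q + 1) = v ^ (q + 1) ∧ Nat.gcd r ((q ^ 2 - 1) / d) = 1) ∨
      (u ^ (q + 1) ≠ v ^ (q + 1) ∧ r = 1))
    (φ : Polynomial F)
    (A B : F) (hA : A = b * u - a * v) (hB : B = a * u ^ q - b * v ^ q)
    (f h : F → F)
    (hf : f = fun x => (a * x ^ q + b * x + c) ^ r *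
      φ.eval ((a * x ^ q + b * x + c) ^ ((q ^ 2 - 1) / d)) + u * x ^ q + v * x)
    (hh : h = fun x => x ^ r * (B * φ.eval x +
      A * (A ^ r)⁻¹ * B ^ (q * r) * (φ.eval x) ^ q +
      u ^ (q + 1) - v ^ (q + 1)) ^ ((q ^ 2 - 1) / d)) :
    Function.Bijective f ↔
      Set.BijOn h {x : F | x ^ d = 1} {x : F | x ^ d = 1} :=
  stmt_2_general q hq hF d hdodd hdvd a b c u v hab hab1 hac hA0 r hr huvr φ A B hA hB f h hf hh
end

section
/- Let q be a prime power and let a, b, c ∈ F_{q²} with a·b ≠ 0. Then the polynomial a·x^q + b·x + c is a permutation polynomial of F_{q²} if and only if a^{q+1} ≠ b^{q+1}. -/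
/-!
The map `x ↦ a x^q + b x` is additive, so `a x^q + b x + c` permutes `F` iff no `z ≠ 0` has
`a z^q = -b z`, i.e. iff `-b/a` is not a `(q-1)`-th power of a unit. As `Fˣ` is cyclic of order
`(q-1)(q+1)`, the `(q-1)`-th powers are exactly the `(q+1)`-th roots of unity, and
`(-b/a)^(q+1) = b^(q+1)/a^(q+1)` because `(-1)^q = -1` in characteristic `p`.
-/

open Function

lemma IsCyclic.exists_pow_eq_of_pow_eq_one {G : Type*} [Group G] [IsCyclic G] [Finite G]
    {m n : ℕ} (hG : Nat.card G = m * n) {y : G} (hy : y ^ n = 1) : ∃ x : G, x ^ m = y := by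
  obtain ⟨g, hg⟩ := IsCyclic.exists_monoid_generator (α := G)
  obtain ⟨i, rfl⟩ := hg y
  have hn : 0 < n := Nat.pos_of_mul_pos_left (hG ▸ Nat.card_pos)
  have hord : orderOf g = m * n :=
    hG ▸ orderOf_eq_card_of_forall_mem_zpowers fun x => mem_powers_iff_mem_zpowers.mp (hg x)
  have hmn : m * n ∣ i * n := hord ▸ orderOf_dvd_of_pow_eq_one (by rw [pow_mul, hy])
  obtain ⟨j, rfl⟩ := (Nat.mul_dvd_mul_iff_right hn).mp hmn
  exact ⟨g ^ j, by rw [← pow_mul, mul_comm]⟩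

lemma FiniteField.exists_pow_sub_one_eq_iff {F : Type*} [Field F] [Fintype F] {q : ℕ}
    (hF : Fintype.card F = q ^ 2) {u : F} :
    (∃ z : F, z ≠ 0 ∧ z ^ (q - 1) = u) ↔ u ^ (q + 1) = 1 := by
  have hcard : Fintype.card F - 1 = (q - 1) * (q + 1) := by
    rw [hF, mul_comm, ← Nat.sq_sub_sq, one_pow]
  constructor
  · rintro ⟨z, hz, rfl⟩
    rw [← pow_mul, ← hcard]
    exact FiniteField.pow_card_sub_one_eq_one z hz
  · intro hu
    lift u to Fˣ using
      isUnit_iff_ne_zero.mpr (ne_zero_pow (Nat.succ_ne_zero q) (by simp [hu]))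
    have hcardU : Nat.card Fˣ = (q - 1) * (q + 1) := by
      rw [Nat.card_units, Nat.card_eq_fintype_card, hcard]
    obtain ⟨x, hx⟩ :=
      IsCyclic.exists_pow_eq_of_pow_eq_one hcardU (Units.ext (by simpa using hu))
    exact ⟨x, x.ne_zero, by rw [← Units.val_pow_eq_pow_val, hx]⟩

lemma AddMonoidHom.bijective_add_const_iff {A : Type*} [AddGroup A] [Finite A] (L : A →+ A)
    (c : A) : Bijective (fun x => L x + c) ↔ ∀ z, L z = 0 → z = 0 := by
  rw [← Finite.injective_iff_bijective, ← injective_iff_map_eq_zero]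
  exact (add_left_injective c).of_comp_iff L

lemma exists_ne_zero_mul_pow_char_pow_add_mul_eq_zero_iff {F : Type*} [Field F] [Fintype F]
    {p : ℕ} [Fact p.Prime] [CharP F p] {k : ℕ} (hF : Fintype.card F = (p ^ k) ^ 2)
    {a b : F} (ha : a ≠ 0) :
    (∃ z : F, z ≠ 0 ∧ a * z ^ p ^ k + b * z = 0) ↔ a ^ (p ^ k + 1) = b ^ (p ^ k + 1) := by
  have hq : 0 < p ^ k := pow_pos (Fact.out : p.Prime).pos k
  have hkernel :
      ∀ z : F, z ≠ 0 → (a * z ^ p ^ k + b * z = 0 ↔ z ^ (p ^ k - 1) = -b / a) := by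
    intro z hz
    have hzq : z ^ p ^ k = z ^ (p ^ k - 1) * z := by rw [← pow_succ, Nat.sub_add_cancel hq]
    rw [hzq, ← mul_assoc, ← add_mul, mul_eq_zero, or_iff_left hz, eq_div_iff ha,
      add_eq_zero_iff_eq_neg, mul_comm]
  have hsign : (-1 : F) ^ (p ^ k + 1) = 1 := by rw [pow_succ, neg_one_pow_char_pow]; simp
  rw [exists_congr fun z => and_congr_right (hkernel z),
    FiniteField.exists_pow_sub_one_eq_iff hF, neg_div, neg_eq_neg_one_mul, mul_pow, hsign,
    one_mul, div_pow, div_eq_one_iff_eq (pow_ne_zero _ ha), eq_comm]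

theorem stmt_4 {F : Type*} [Field F] [Fintype F]
    (q : ℕ) (hq : IsPrimePow q) (hF : Fintype.card F = q ^ 2)
    (a b c : F) (hab : a * b ≠ 0) :
    Function.Bijective (fun x : F => a * x ^ q + b * x + c) ↔
      a ^ (q + 1) ≠ b ^ (q + 1) := by
  obtain ⟨p, k, hp, -, rfl⟩ := hq
  have : Fact p.Prime := ⟨hp.nat_prime⟩
  have : CharP F p := charP_of_card_eq_prime_pow (f := k * 2) (by rw [hF, pow_mul])
  let L : F →+ F := AddMonoidHom.mk' (fun x => a * x ^ p ^ k + b * x) fun x y => by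
    rw [add_pow_char_pow]; ring
  change Bijective (fun x => L x + c) ↔ _
  rw [L.bijective_add_const_iff c, ne_eq,
    ← exists_ne_zero_mul_pow_char_pow_add_mul_eq_zero_iff hF (left_ne_zero_of_mul hab),
    not_exists]
  exact forall_congr' fun z => by rw [not_and, not_imp_not]; rfl
end

section
/- Let q be a prime power and let a, b, c, u, v ∈ F_{q²} satisfy a·b ≠ 0, a^{q+1} = b^{q+1}, a·c^q = b^q·c and b·u ≠ a·v. Let r be a positive integer and define f(x) = (a·x^q + b·x + c)^r + u·x^q + v·x and g(x) = (B + A^{1−r}·B^{q·r})·x^r + (u^{q+1} − v^{q+1})·x. Then f is a permutation polynomial of F_{q²} if and only if g permutes S. In particular: (i) if B + A^{1−r}·B^{q·r} = 0, then f is a permutation polynomial of F_{q²} if and only if u^{q+1} ≠ v^{q+1}; (ii) if u^{q+1} = v^{q+1}, then f is a permutation polynomial of F_{q²} if and only if B + A^{1−r}·B^{q·r} ≠ 0 and gcd(r, q−1) = 1. -/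
/-!
Let `t = b^q / a`. The hypotheses say exactly that `φ(x) = a x^q + b x + c` satisfies
`φ(x)^q = t φ(x)`, so `S` lies in `T = {y | y^q = t y}`. The polynomial `X^q - tX` has at most
`q` roots, while the kernel of the additive map `x ↦ a x^q + b x` has at most `q` elements, so
`|S| ≥ q ≥ |T|` and `S = T`. For the same reason `ψ(y) = A y^q + B y + (u^{q+1} - v^{q+1}) c`
maps `F` onto `T`, and expanding `f^q` gives `ψ ∘ f = g ∘ φ`. As `bu ≠ av`, `f` is injective on
the fibres of `φ`, hence `f` is a bijection iff `g` permutes `T`. When a coefficient of `g`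
vanishes, `g` is a monomial on `T`; quotients of nonzero elements of `T` lie in `𝔽_q^*`, so
`y ↦ y^r` is injective on `T` iff `gcd(r, q - 1) = 1`.
-/

theorem FiniteField.add_pow_of_isPrimePow_dvd_card {F : Type*} [Field F] [Fintype F] {q : ℕ}
    (hq : IsPrimePow q) (hdvd : q ∣ Fintype.card F) (x y : F) :
    (x + y) ^ q = x ^ q + y ^ q := by
  obtain ⟨p, k, hp, hk, rfl⟩ := hq
  obtain ⟨p', _, n, hp', hcard⟩ := FiniteField.card' F
  have hpp' : p = p' := (Nat.prime_dvd_prime_iff_eq hp.nat_prime hp').mp <|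
    hp.nat_prime.dvd_of_dvd_pow <| (dvd_pow_self p hk.ne').trans (hcard ▸ hdvd)
  subst hpp'
  have := Fact.mk hp'
  exact add_pow_char_pow x y p k

theorem bijective_iff_bijOn_of_comm_square {X Y : Type*} [Finite X] {f : X → X} {φ ψ : X → Y}
    {g : Y → Y} {S : Set Y} (hφ : Set.range φ = S) (hψ : Set.range ψ = S)
    (hcomm : ∀ x, ψ (f x) = g (φ x)) (hfib : ∀ x x', φ x = φ x' → f x = f x' → x = x') :
    Function.Bijective f ↔ Set.BijOn g S S := by
  subst hφ
  constructor
  · intro hf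
    have hmaps : Set.MapsTo g (Set.range φ) (Set.range φ) := by
      rintro _ ⟨x, rfl⟩
      exact hψ ▸ ⟨f x, hcomm x⟩
    refine (Set.finite_range φ).surjOn_iff_bijOn_of_mapsTo hmaps |>.mp ?_
    intro s hs
    obtain ⟨w, rfl⟩ := hψ ▸ hs
    obtain ⟨x, rfl⟩ := hf.2 w
    exact ⟨φ x, ⟨x, rfl⟩, (hcomm x).symm⟩
  · intro hg
    refine Finite.injective_iff_bijective.mp fun x x' hxx' => hfib x x' ?_ hxx'
    exact hg.injOn ⟨x, rfl⟩ ⟨x', rfl⟩ (by rw [← hcomm, ← hcomm, hxx'])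

def frobAffine {F : Type*} [Semiring F] (q : ℕ) (α β γ : F) (x : F) : F :=
  α * x ^ q + β * x + γ

section

variable {F : Type*} [Field F] {q : ℕ}

open Polynomial in
theorem ncard_setOf_pow_eq_mul_le (hq : 2 ≤ q) (s : F) :
    {y : F | y ^ q = s * y}.ncard ≤ q := by
  classical
  set P : F[X] := X ^ q - C s * X
  have hdeg : P.natDegree = q := by
    rw [natDegree_sub_eq_left_of_natDegree_lt] <;> simp only [natDegree_X_pow]
    exact (natDegree_C_mul_le s X).trans_lt (by rw [natDegree_X]; omega)
  have hP : P ≠ 0 := ne_zero_of_natDegree_gt (n := 0) (by omega)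
  calc {y : F | y ^ q = s * y}.ncard ≤ (P.roots.toFinset : Set F).ncard :=
        Set.ncard_le_ncard (fun y hy => by simp [P, hP, hy.out]) (Set.toFinite _)
    _ ≤ P.natDegree := by
        rw [Set.ncard_coe_finset]; exact (Multiset.toFinset_card_le _).trans (card_roots' P)
    _ = q := hdeg

theorem sub_pow_of_add_pow (hadd : ∀ x y : F, (x + y) ^ q = x ^ q + y ^ q) (x y : F) :
    (x - y) ^ q = x ^ q - y ^ q :=
  eq_sub_of_add_eq (by rw [← hadd, sub_add_cancel])

theorem le_ncard_range_frobAffine [Fintype F] (hq : 2 ≤ q) (hF : Fintype.card F = q ^ 2)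
    (hadd : ∀ x y : F, (x + y) ^ q = x ^ q + y ^ q) {α : F} (hα : α ≠ 0) (β γ : F) :
    q ≤ (Set.range (frobAffine q α β γ)).ncard := by
  let ρ : F →+ F := AddMonoidHom.mk' (fun y => α * y ^ q + β * y) fun x y => by rw [hadd]; ring
  have hker : Nat.card ρ.ker ≤ q := by
    have hsub : (ρ.ker : Set F) ⊆ {y | y ^ q = (-β / α) * y} :=
      fun y (hy : α * y ^ q + β * y = 0) => by
        show y ^ q = (-β / α) * y
        field_simp; linear_combination hy
    rw [← SetLike.coe_sort_coe, Nat.card_coe_set_eq]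
    exact (Set.ncard_le_ncard hsub (Set.toFinite _)).trans (ncard_setOf_pow_eq_mul_le hq _)
  have hcard : Nat.card ρ.ker * Nat.card ρ.range = q * q := by
    rw [← AddSubgroup.index_ker, AddSubgroup.card_mul_index, Nat.card_eq_fintype_card, hF, sq]
  have hrange : Set.range (frobAffine q α β γ) = (· + γ) '' (ρ.range : Set F) := by
    rw [AddMonoidHom.coe_range, ← Set.range_comp]; rfl
  rw [hrange, Set.ncard_image_of_injective _ (add_left_injective γ), ← Nat.card_coe_set_eq]
  exact Nat.le_of_mul_le_mul_left (hcard ▸ Nat.mul_le_mul_right _ hker) (by omega)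

theorem frobAffine_pow_eq_mul (hadd : ∀ x y : F, (x + y) ^ q = x ^ q + y ^ q)
    (hinv : ∀ x : F, (x ^ q) ^ q = x) {t α β γ : F} (hα : t * α = β ^ q) (hβ : t * β = α ^ q)
    (hγ : t * γ = γ ^ q) (x : F) :
    frobAffine q α β γ x ^ q = t * frobAffine q α β γ x := by
  rw [frobAffine, hadd, hadd, mul_pow, mul_pow, hinv]
  linear_combination -x ^ q * hα - x * hβ - hγ

theorem range_frobAffine_eq [Fintype F] (hq : 2 ≤ q) (hF : Fintype.card F = q ^ 2)
    (hadd : ∀ x y : F, (x + y) ^ q = x ^ q + y ^ q) (hinv : ∀ x : F, (x ^ q) ^ q = x)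
    {t α β γ : F} (hα0 : α ≠ 0) (hα : t * α = β ^ q) (hβ : t * β = α ^ q)
    (hγ : t * γ = γ ^ q) :
    Set.range (frobAffine q α β γ) = {y | y ^ q = t * y} :=
  Set.eq_of_subset_of_ncard_le
    (Set.range_subset_iff.mpr (frobAffine_pow_eq_mul hadd hinv hα hβ hγ))
    ((ncard_setOf_pow_eq_mul_le hq t).trans (le_ncard_range_frobAffine hq hF hadd hα0 β γ))
    (Set.toFinite _)

theorem exists_mul_eq_pow_of_pow_succ_eq (hinv : ∀ x : F, (x ^ q) ^ q = x) {a b c : F}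
    (ha : a ≠ 0) (hab : a ^ (q + 1) = b ^ (q + 1)) (hac : a * c ^ q = b ^ q * c) :
    ∃ t : F, t ^ q * t = 1 ∧ t * a = b ^ q ∧ t * b = a ^ q ∧ t * c = c ^ q := by
  have hta : b ^ q / a * a = b ^ q := div_mul_cancel₀ _ ha
  have htb : b ^ q / a * b = a ^ q := by
    field_simp; linear_combination -(pow_succ a q).symm.trans (hab.trans (pow_succ b q))
  refine ⟨b ^ q / a, ?_, hta, htb, by field_simp; linear_combination -hac⟩
  have : (b ^ q / a) ^ q * (b ^ q / a) * a = a := by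
    rw [mul_assoc, hta, ← mul_pow, htb, hinv]
  exact mul_right_cancel₀ ha (this.trans (one_mul a).symm)

theorem sub_mul_pow_eq_mul (hadd : ∀ x y : F, (x + y) ^ q = x ^ q + y ^ q)
    {t a b : F} (hta : t * a = b ^ q) (htb : t * b = a ^ q) (u v : F) :
    (b * u - a * v) ^ q = t * (a * u ^ q - b * v ^ q) := by
  rw [sub_pow_of_add_pow hadd, mul_pow, mul_pow]
  linear_combination -u ^ q * hta + v ^ q * htb

theorem mul_pow_sub_mul_pow_pow_eq_mul (hadd : ∀ x y : F, (x + y) ^ q = x ^ q + y ^ q)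
    (hinv : ∀ x : F, (x ^ q) ^ q = x) {t a b : F} (hta : t * a = b ^ q) (htb : t * b = a ^ q)
    (u v : F) : (a * u ^ q - b * v ^ q) ^ q = t * (b * u - a * v) := by
  rw [sub_pow_of_add_pow hadd, mul_pow, mul_pow, hinv, hinv]
  linear_combination -u * htb + v * hta

theorem pow_succ_sub_pow_succ_pow (hadd : ∀ x y : F, (x + y) ^ q = x ^ q + y ^ q)
    (hinv : ∀ x : F, (x ^ q) ^ q = x) (u v : F) :
    (u ^ (q + 1) - v ^ (q + 1)) ^ q = u ^ (q + 1) - v ^ (q + 1) := by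
  rw [sub_pow_of_add_pow hadd, pow_succ, pow_succ, mul_pow, mul_pow, hinv, hinv]
  ring

theorem frobAffine_comm (hadd : ∀ x y : F, (x + y) ^ q = x ^ q + y ^ q)
    (hinv : ∀ x : F, (x ^ q) ^ q = x) {t a b c : F} (hta : t * a = b ^ q) (htb : t * b = a ^ q)
    (htc : t * c = c ^ q) (u v : F) (r : ℕ) (x : F) :
    frobAffine q (b * u - a * v) (a * u ^ q - b * v ^ q) ((u ^ (q + 1) - v ^ (q + 1)) * c)
        (frobAffine q a b c x ^ r + u * x ^ q + v * x) =
      (a * u ^ q - b * v ^ q + (b * u - a * v) * t ^ r) * frobAffine q a b c x ^ r +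
        (u ^ (q + 1) - v ^ (q + 1)) * frobAffine q a b c x := by
  have hφ := frobAffine_pow_eq_mul hadd hinv hta htb htc x
  rw [frobAffine, hadd, hadd, mul_pow, mul_pow, hinv, ← pow_mul, mul_comm r q, pow_mul, hφ,
    mul_pow t]
  simp only [frobAffine]
  ring

theorem eq_of_frobAffine_eq (hadd : ∀ x y : F, (x + y) ^ q = x ^ q + y ^ q) {a b c u v : F}
    (hbu : b * u ≠ a * v) {r : ℕ} {x x' : F}
    (hφ : frobAffine q a b c x = frobAffine q a b c x')
    (hf : frobAffine q a b c x ^ r + u * x ^ q + v * x =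
      frobAffine q a b c x' ^ r + u * x' ^ q + v * x') : x = x' := by
  have hφ' : a * (x - x') ^ q + b * (x - x') = 0 := by
    rw [sub_pow_of_add_pow hadd]; unfold frobAffine at hφ; linear_combination hφ
  have hf' : u * (x - x') ^ q + v * (x - x') = 0 := by
    rw [hφ] at hf; rw [sub_pow_of_add_pow hadd]; linear_combination hf
  have : (b * u - a * v) * (x - x') = 0 := by linear_combination u * hφ' - a * hf'
  exact sub_eq_zero.mp ((mul_eq_zero.mp this).resolve_left (sub_ne_zero.mpr hbu))

theorem mapsTo_mul_pow_add_mul (hadd : ∀ x y : F, (x + y) ^ q = x ^ q + y ^ q) {t A B D : F}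
    (ht : t ^ q * t = 1) (hA : A ^ q = t * B) (hB : B ^ q = t * A) (hD : D ^ q = D) (r : ℕ) :
    Set.MapsTo (fun y => (B + A * t ^ r) * y ^ r + D * y) {y | y ^ q = t * y}
      {y | y ^ q = t * y} := by
  intro y (hy : y ^ q = t * y)
  have hpow : ∀ z : F, (z ^ r) ^ q = (z ^ q) ^ r := fun z => by
    rw [← pow_mul, ← pow_mul, mul_comm]
  have htr : (t ^ r) ^ q * t ^ r = 1 := by rw [hpow, ← mul_pow, ht, one_pow]
  show ((B + A * t ^ r) * y ^ r + D * y) ^ q = t * ((B + A * t ^ r) * y ^ r + D * y)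
  rw [hadd, mul_pow, mul_pow, hadd, mul_pow, hA, hB, hD, hpow y, hy, mul_pow]
  linear_combination t * B * y ^ r * htr

theorem bijective_iff_bijOn_setOf_pow_eq_mul [Fintype F] (hq : 2 ≤ q)
    (hF : Fintype.card F = q ^ 2) (hadd : ∀ x y : F, (x + y) ^ q = x ^ q + y ^ q)
    (hinv : ∀ x : F, (x ^ q) ^ q = x) {t a b c u v : F} (ha : a ≠ 0) (hbu : b * u ≠ a * v)
    (hta : t * a = b ^ q) (htb : t * b = a ^ q) (htc : t * c = c ^ q) (r : ℕ) :
    Function.Bijective (fun x => frobAffine q a b c x ^ r + u * x ^ q + v * x) ↔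
      Set.BijOn (fun y => (a * u ^ q - b * v ^ q + (b * u - a * v) * t ^ r) * y ^ r +
        (u ^ (q + 1) - v ^ (q + 1)) * y) {y | y ^ q = t * y} {y | y ^ q = t * y} := by
  have hψ : Set.range (frobAffine q (b * u - a * v) (a * u ^ q - b * v ^ q)
      ((u ^ (q + 1) - v ^ (q + 1)) * c)) = {y | y ^ q = t * y} :=
    range_frobAffine_eq hq hF hadd hinv (sub_ne_zero.mpr hbu)
      (mul_pow_sub_mul_pow_pow_eq_mul hadd hinv hta htb u v).symm
      (sub_mul_pow_eq_mul hadd hta htb u v).symm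
      (by rw [mul_pow, pow_succ_sub_pow_succ_pow hadd hinv, ← htc]; ring)
  exact bijective_iff_bijOn_of_comm_square (range_frobAffine_eq hq hF hadd hinv ha hta htb htc) hψ
    (frobAffine_comm hadd hinv hta htb htc u v r) fun _ _ => eq_of_frobAffine_eq hadd hbu

theorem bijOn_const_mul_iff [Finite F] {S : Set F} (hS : S.Nontrivial)
    {h : F → F} {C : F} (hmaps : Set.MapsTo (fun y => C * h y) S S) :
    Set.BijOn (fun y => C * h y) S S ↔ C ≠ 0 ∧ Set.InjOn h S := by
  refine ⟨fun hbij => ⟨fun hC => ?_, fun y hy y' hy' hyy' => hbij.injOn hy hy' ?_⟩,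
    fun ⟨hC, hinj⟩ => ?_⟩
  · obtain ⟨y₁, h₁, y₂, h₂, hne⟩ := hS
    exact hne (hbij.injOn h₁ h₂ (by simp only [hC, zero_mul]))
  · simp only [hyy']
  · refine (S.toFinite.injOn_iff_bijOn_of_mapsTo hmaps).mp fun y hy y' hy' hyy' => ?_
    exact hinj hy hy' (mul_left_cancel₀ hC hyy')

theorem injOn_pow_iff_coprime [Finite F] {r : ℕ} {t : F} (hr : 0 < r)
    (hT : {y : F | y ^ q = t * y}.Nontrivial) (hdvd : q - 1 ∣ Nat.card Fˣ) :
    Set.InjOn (· ^ r) {y : F | y ^ q = t * y} ↔ r.Coprime (q - 1) := by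
  have hq : q ≠ 0 := by
    rintro rfl
    exact Nat.card_pos.ne' (Nat.eq_zero_of_zero_dvd hdvd)
  constructor
  · intro hinj
    by_contra hcop
    obtain ⟨ℓ, hℓ, hℓdvd⟩ := Nat.exists_prime_and_dvd hcop
    have := Fact.mk hℓ
    obtain ⟨ζ, hζ⟩ := exists_prime_orderOf_dvd_card' ℓ
      ((hℓdvd.trans (Nat.gcd_dvd_right _ _)).trans hdvd)
    have hζ1 : ∀ n, ℓ ∣ n → (ζ : F) ^ n = 1 := fun n hn => by
      rw [← Units.val_pow_eq_pow_val, orderOf_dvd_iff_pow_eq_one.mp (hζ ▸ hn), Units.val_one]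
    have hζq : (ζ : F) ^ q = ζ := by
      rw [← pow_sub_one_mul hq, hζ1 _ (hℓdvd.trans (Nat.gcd_dvd_right _ _)), one_mul]
    obtain ⟨y, hy, hy0⟩ := hT.exists_ne 0
    have hζy : (ζ : F) * y = y := hinj (show _ = _ by rw [mul_pow, hζq, hy.out]; ring) hy
      (by simp only [mul_pow, hζ1 r (hℓdvd.trans (Nat.gcd_dvd_left _ _)), one_mul])
    have : ζ = 1 := Units.ext (mul_right_cancel₀ hy0 (hζy.trans (one_mul y).symm))
    exact hℓ.one_lt.ne' (by rw [← hζ, this, orderOf_one])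
  · intro hcop y (hy : y ^ q = t * y) y' (hy' : y' ^ q = t * y') (hyy' : y ^ r = y' ^ r)
    rcases eq_or_ne y' 0 with rfl | hy'0
    · exact pow_eq_zero_iff hr.ne' |>.mp (hyy'.trans (zero_pow hr.ne'))
    have hy0 : y ≠ 0 := by
      rintro rfl
      exact hy'0 (pow_eq_zero_iff hr.ne' |>.mp (hyy'.symm.trans (zero_pow hr.ne')))
    have ht0 : t ≠ 0 := by
      rintro rfl
      exact hy0 (pow_eq_zero_iff hq |>.mp (hy.trans (zero_mul y)))
    have hzr : (y / y') ^ r = 1 := by rw [div_pow, hyy', div_self (pow_ne_zero r hy'0)]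
    have hzq : (y / y') ^ (q - 1) = 1 := by
      refine mul_right_cancel₀ (div_ne_zero hy0 hy'0) ?_
      rw [pow_sub_one_mul hq, one_mul, div_pow, hy, hy', mul_div_mul_left _ _ ht0]
    have := pow_gcd_eq_one.mpr ⟨hzr, hzq⟩
    rw [hcop.gcd_eq_one, pow_one] at this
    exact (div_eq_one_iff_eq hy'0).mp this

end

theorem stmt_7 {F : Type*} [Field F] [Fintype F]
    (q : ℕ) (hq : IsPrimePow q) (hF : Fintype.card F = q ^ 2)
    (a b c u v : F) (hab : a * b ≠ 0)
    (hab1 : a ^ (q + 1) = b ^ (q + 1)) (hac : a * c ^ q = b ^ q * c)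
    (hA0 : b * u ≠ a * v)
    (r : ℕ) (hr : 0 < r)
    (A B : F) (hA : A = b * u - a * v) (hB : B = a * u ^ q - b * v ^ q)
    (S : Set F) (hS : S = {y : F | ∃ x : F, a * x ^ q + b * x + c = y})
    (f g : F → F)
    (hf : f = fun x => (a * x ^ q + b * x + c) ^ r + u * x ^ q + v * x)
    (hg : g = fun x => (B + A * (A ^ r)⁻¹ * B ^ (q * r)) * x ^ r +
      (u ^ (q + 1) - v ^ (q + 1)) * x) :
    (Function.Bijective f ↔ Set.BijOn g S S) ∧
    (B + A * (A ^ r)⁻¹ * B ^ (q * r) = 0 →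
      (Function.Bijective f ↔ u ^ (q + 1) ≠ v ^ (q + 1))) ∧
    (u ^ (q + 1) = v ^ (q + 1) →
      (Function.Bijective f ↔
        (B + A * (A ^ r)⁻¹ * B ^ (q * r) ≠ 0 ∧ Nat.gcd r (q - 1) = 1))) := by
  have hq2 : 2 ≤ q := hq.two_le
  have hadd : ∀ x y : F, (x + y) ^ q = x ^ q + y ^ q :=
    FiniteField.add_pow_of_isPrimePow_dvd_card hq (hF ▸ dvd_pow_self q two_ne_zero)
  have hinv : ∀ x : F, (x ^ q) ^ q = x := fun x => by
    rw [← pow_mul, ← sq, ← hF, FiniteField.pow_card]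
  have ha : a ≠ 0 := left_ne_zero_of_mul hab
  obtain ⟨t, ht, hta, htb, htc⟩ := exists_mul_eq_pow_of_pow_succ_eq hinv ha hab1 hac
  have hBq : B ^ q = t * A := hA ▸ hB ▸ mul_pow_sub_mul_pow_pow_eq_mul hadd hinv hta htb u v
  have hC : B + A * (A ^ r)⁻¹ * B ^ (q * r) = B + A * t ^ r := by
    have : A ≠ 0 := hA ▸ sub_ne_zero.mpr hA0
    rw [pow_mul, hBq, mul_pow]; field_simp
  have hφ := range_frobAffine_eq hq2 hF hadd hinv ha hta htb htc
  have hT : {y : F | y ^ q = t * y}.Nontrivial := by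
    rw [← Set.one_lt_ncard_iff_nontrivial, ← hφ]
    exact hq2.trans (le_ncard_range_frobAffine hq2 hF hadd ha b c)
  have hmaps := mapsTo_mul_pow_add_mul hadd ht (hA ▸ hB ▸ sub_mul_pow_eq_mul hadd hta htb u v)
    hBq (pow_succ_sub_pow_succ_pow hadd hinv u v) r
  have main := bijective_iff_bijOn_setOf_pow_eq_mul hq2 hF hadd hinv ha hA0 hta htb htc r
  rw [← hA, ← hB] at main
  have hST : S = {y | y ^ q = t * y} := hS.trans hφ
  subst hST hf hg
  rw [hC]
  refine ⟨main, fun hC0 => main.trans ?_, fun hD0 => main.trans ?_⟩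
  · simp only [hC0, zero_mul, zero_add] at hmaps ⊢
    rw [bijOn_const_mul_iff hT hmaps, sub_ne_zero]
    exact and_iff_left (Set.injOn_id _)
  · have hdvd : q - 1 ∣ Nat.card Fˣ := by
      rw [Nat.card_units, Nat.card_eq_fintype_card, hF]
      simpa using Nat.sub_dvd_pow_sub_pow q 1 2
    simp only [hD0, sub_self, zero_mul, add_zero] at hmaps ⊢
    rw [bijOn_const_mul_iff hT hmaps, injOn_pow_iff_coprime hr hT hdvd,
      Nat.coprime_iff_gcd_eq_one]
end

section
/- Let q be a prime power and let d be a positive divisor of q+1. Let r be a positive integer, φ a polynomial over F_{q²}, and a, b, c, u, v ∈ F_{q²} satisfy a·b ≠ 0, a^{q+1} = b^{q+1} and a·c^q = b^q·c. Set δ = (b^q/a)^{(q+1)/d} and f(x) = (a·x^q + b·x + c)^r · φ((a·x^q + b·x + c)^{(q²−1)/d}) + u·x^q + v·x. Then for every x ∈ F_{q²}, f(x) = φ(δ)·(a·x^q + b·x + c)^r + u·x^q + v·x; that is, f(x) is congruent to φ(δ)·(a·x^q + b·x + c)^r + u·x^q + v·x modulo x^{q²} − x. -/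
/-!
Put `y = a x^q + b x + c`. As `q` divides `|F| = p^n`, it is a power of the characteristic, so
raising to the `q`-th power is additive; with `x^{q^2} = x` on `𝔽_{q^2}`, the two hypotheses on
`a, b, c` give `a y^q = b^q y`. Hence every nonzero value `y` satisfies `y^{q-1} = b^q / a`, so
`y^{(q^2-1)/d} = (y^{q-1})^{(q+1)/d} = δ`; at the zeros of `y` both sides
reduce to `u x^q + v x` because `r > 0`.
-/

namespace FiniteField

variable {F : Type*} [Field F] [Fintype F]

theorem add_pow_of_dvd_card {q : ℕ} (hq : q ∣ Fintype.card F) (x y : F) :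
    (x + y) ^ q = x ^ q + y ^ q := by
  obtain ⟨p, hchar⟩ := CharP.exists F
  have : Fact p.Prime := ⟨CharP.char_is_prime F p⟩
  obtain ⟨n, -, hcard⟩ := FiniteField.card F p
  obtain ⟨k, -, rfl⟩ := (Nat.dvd_prime_pow Fact.out).1 (hcard ▸ hq)
  exact add_pow_char_pow x y p k

theorem mul_pow_affine_frobenius_eq {q : ℕ} (hF : Fintype.card F = q ^ 2) {a b c : F}
    (hab : a ^ (q + 1) = b ^ (q + 1)) (hac : a * c ^ q = b ^ q * c) (x : F) :
    a * (a * x ^ q + b * x + c) ^ q = b ^ q * (a * x ^ q + b * x + c) := by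
  have hq : q ∣ Fintype.card F := hF ▸ Dvd.intro_left _ (sq q).symm
  have hxq : x ^ q ^ 2 = x := hF ▸ FiniteField.pow_card x
  have hfrob : (a * x ^ q + b * x + c) ^ q = a ^ q * x + b ^ q * x ^ q + c ^ q := by
    rw [add_pow_of_dvd_card hq, add_pow_of_dvd_card hq, mul_pow, mul_pow, ← pow_mul, ← sq, hxq]
  rw [hfrob]
  linear_combination x * hab + hac

end FiniteField

theorem pow_pred_eq_div_of_mul_pow_eq {K : Type*} [Field K] {q : ℕ} (hq : q ≠ 0) {a b y : K}
    (ha : a ≠ 0) (hy : y ≠ 0) (h : a * y ^ q = b * y) : y ^ (q - 1) = b / a := by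
  rw [eq_div_iff ha]
  apply mul_right_cancel₀ hy
  rw [mul_comm _ a, mul_assoc, ← pow_succ, Nat.sub_add_cancel (Nat.one_le_iff_ne_zero.2 hq), h]

theorem Nat.sq_sub_one_div_eq_of_dvd {q d : ℕ} (h : d ∣ q + 1) :
    (q ^ 2 - 1) / d = (q - 1) * ((q + 1) / d) := by
  rw [← one_pow 2, Nat.sq_sub_sq, mul_comm, Nat.mul_div_assoc _ h, one_pow]

theorem stmt_11_general {F : Type*} [Field F] [Fintype F]
    (q : ℕ) (hF : Fintype.card F = q ^ 2)
    (d : ℕ) (hdvd : d ∣ q + 1)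
    (r : ℕ) (hr : 0 < r) (φ : Polynomial F)
    (a b c u v : F) (hab : a * b ≠ 0)
    (hab1 : a ^ (q + 1) = b ^ (q + 1)) (hac : a * c ^ q = b ^ q * c)
    (δ : F) (hδ : δ = (b ^ q / a) ^ ((q + 1) / d)) :
    ∀ x : F, (a * x ^ q + b * x + c) ^ r *
        φ.eval ((a * x ^ q + b * x + c) ^ ((q ^ 2 - 1) / d)) + u * x ^ q + v * x =
      φ.eval δ * (a * x ^ q + b * x + c) ^ r + u * x ^ q + v * x := by
  intro x
  set y := a * x ^ q + b * x + c
  rcases eq_or_ne y 0 with hy | hy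
  · simp [hy, zero_pow hr.ne']
  have hq : q ≠ 0 := by
    rintro rfl
    exact Fintype.card_ne_zero (hF.trans (zero_pow two_ne_zero))
  have hyq : y ^ (q - 1) = b ^ q / a :=
    pow_pred_eq_div_of_mul_pow_eq hq (left_ne_zero_of_mul hab) hy
      (FiniteField.mul_pow_affine_frobenius_eq hF hab1 hac x)
  rw [Nat.sq_sub_one_div_eq_of_dvd hdvd, pow_mul, hyq, ← hδ, mul_comm]

theorem stmt_11 {F : Type*} [Field F] [Fintype F]
    (q : ℕ) (hq : IsPrimePow q) (hF : Fintype.card F = q ^ 2)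
    (d : ℕ) (hd0 : 0 < d) (hdvd : d ∣ q + 1)
    (r : ℕ) (hr : 0 < r) (φ : Polynomial F)
    (a b c u v : F) (hab : a * b ≠ 0)
    (hab1 : a ^ (q + 1) = b ^ (q + 1)) (hac : a * c ^ q = b ^ q * c)
    (δ : F) (hδ : δ = (b ^ q / a) ^ ((q + 1) / d)) :
    ∀ x : F, (a * x ^ q + b * x + c) ^ r *
        φ.eval ((a * x ^ q + b * x + c) ^ ((q ^ 2 - 1) / d)) + u * x ^ q + v * x =
      φ.eval δ * (a * x ^ q + b * x + c) ^ r + u * x ^ q + v * x :=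
  stmt_11_general q hF d hdvd r hr φ a b c u v hab hab1 hac δ hδ
end

section
/- Let q be an odd prime power, let d ≥ 3 be an odd divisor of q−1, let b, c ∈ F_{q²} satisfy b^{q+1} = 1 and c^q = b^q·c, and let e be a nonzero element of the subfield F_q of F_{q²}. Define f(x) = Σ_{k=0}^{d−1} e·(x^q + b·x + c)^{k·(q²−1)/d + 1} + (1−e)·x^q − b·(1+e)·x. Then f is a permutation polynomial of F_{q²} if and only if (1 − d)^{(q²−1)/d} = 1, where 1 − d denotes the field element 1 minus d·1. -/
/-!
Let `σ x = x ^ q`. Since `σ b * b = 1` and `σ c = σ b * c`, the maps `A x = σ x + b x + c` and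
`B x = σ x - b x` take values in the `𝔽_q`-lines `L = twistedLine σ (σ b)` and
`twistedLine σ (-σ b)`, which meet only in `0`, and `x ↦ (A x, B x)` is injective. Summing the
geometric series gives `f x = e ψ (A x) + e c + B x` with `ψ = indicatorScale d s`,
`s = (q² - 1) / d`, and `e ψ + e c` maps `L` into `L`; so `f` is a permutation iff `ψ` is
injective on `L`. If `(1 - d) ^ s = 1` then `ψ` is injective everywhere; otherwise any nonzero
`y ∈ L` with `y ^ s = 1` collides with `(1 - d) y`. Such a `y` exists because
`gcd (d, q + 1) = 1` makes `b ^ q` a `d (q - 1)`-th power in the cyclic group `𝔽_{q²}ˣ`.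
-/

open Function

theorem Nat.coprime_add_one_of_dvd_sub_one {d q : ℕ} (hd : Odd d) (hdq : d ∣ q - 1)
    (hq : 1 ≤ q) : d.Coprime (q + 1) := by
  obtain ⟨k, hk⟩ := hdq
  rw [show q + 1 = k * d + 2 by rw [mul_comm]; omega, Nat.coprime_mul_right_add_right,
    Nat.coprime_two_right]
  exact hd

theorem Nat.mul_div_sq_sub_one_add_one {d q : ℕ} (hq : 1 ≤ q) (hd : d ∣ q - 1) :
    d * ((q ^ 2 - 1) / d) + 1 = q ^ 2 := by
  have hsq : q - 1 ∣ q ^ 2 - 1 := by simpa only [one_pow] using Nat.sub_dvd_pow_sub_pow q 1 2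
  rw [Nat.mul_div_cancel' (hd.trans hsq), Nat.sub_add_cancel (Nat.one_le_pow 2 q hq)]

theorem sum_range_pow_mul_add_one {K : Type*} [Field K] [DecidableEq K] {y : K} {d s : ℕ}
    (hy : y ^ (d * s + 1) = y) :
    ∑ k ∈ Finset.range d, y ^ (k * s + 1) = (if y ^ s = 1 then (d : K) else 0) * y := by
  have hterm : ∀ k, y ^ (k * s + 1) = (y ^ s) ^ k * y := fun k => by
    rw [pow_succ, mul_comm k s, pow_mul]
  simp_rw [hterm, ← Finset.sum_mul]
  split_ifs with hys
  · simp [hys]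
  rcases eq_or_ne y 0 with rfl | hy0
  · simp
  have hpow : (y ^ s) ^ d = 1 := by
    rwa [pow_succ, mul_eq_right₀ hy0, mul_comm, pow_mul] at hy
  rw [geom_sum_eq hys, hpow, sub_self, zero_div, zero_mul]

theorem injOn_mul_add_iff {α K : Type*} [Field K] {S : Set α} {g : α → K} {e c : K}
    (he : e ≠ 0) :
    Set.InjOn (fun y => e * g y + c) S ↔ Set.InjOn g S :=
  ⟨Set.InjOn.of_comp (g := fun t => e * t + c),
    ((add_left_injective c).comp (mul_right_injective₀ he)).comp_injOn⟩

theorem IsCyclic.exists_pow_eq_of_pow_eq_one_s15 {G : Type*} [CommGroup G] [IsCyclic G] [Finite G]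
    {m : ℕ} {w : G} (hw : w ^ (Nat.card G / (Nat.card G).gcd m) = 1) : ∃ z, z ^ m = w := by
  set k := Nat.card G / (Nat.card G).gcd m with hk
  have hle : (powMonoidHom m : G →* G).range ≤ (powMonoidHom k).ker := by
    rintro _ ⟨z, rfl⟩
    have hmk : m * k = m / (Nat.card G).gcd m * Nat.card G := by
      rw [hk, ← Nat.mul_div_assoc _ (Nat.gcd_dvd_left _ _),
        Nat.div_mul_right_comm (Nat.gcd_dvd_right _ _)]
    rw [MonoidHom.mem_ker, powMonoidHom_apply, powMonoidHom_apply, ← pow_mul, hmk, pow_mul,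
      pow_card_eq_one']
  have hcard :
      Nat.card (powMonoidHom k : G →* G).ker ≤ Nat.card (powMonoidHom m : G →* G).range := by
    rw [IsCyclic.card_powMonoidHom_ker, IsCyclic.card_powMonoidHom_range,
      Nat.gcd_eq_right (Nat.div_dvd_of_dvd (Nat.gcd_dvd_left _ _))]
  exact (Subgroup.eq_of_le_of_card_ge hle hcard ▸ hw : w ∈ (powMonoidHom m : G →* G).range)

section TwistedLine

variable {K : Type*} [Field K] (σ : K →+* K)

def twistedLine (β : K) : AddSubgroup K where
  carrier := {y | σ y = β * y}
  add_mem' {y y'} hy hy' := by simp_all [mul_add]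
  zero_mem' := by simp
  neg_mem' {y} hy := by simp_all

variable {σ}

theorem mem_twistedLine {β y : K} : y ∈ twistedLine σ β ↔ σ y = β * y := Iff.rfl

theorem eq_zero_of_mem_twistedLine_of_mem_neg {β y : K} (h2 : (2 : K) ≠ 0) (hβ : β ≠ 0)
    (hy : y ∈ twistedLine σ β) (hy' : y ∈ twistedLine σ (-β)) : y = 0 := by
  rw [mem_twistedLine] at hy hy'
  have : (2 * β) * y = 0 := by linear_combination hy' - hy
  simpa [h2, hβ] using this

theorem mul_mem_twistedLine {β r y : K} (hr : σ r = r) (hy : y ∈ twistedLine σ β) :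
    r * y ∈ twistedLine σ β := by
  rw [mem_twistedLine] at hy ⊢
  rw [map_mul, hr, hy, mul_left_comm]

variable {b : K} (hb : σ b * b = 1)
include hb

theorem map_add_mul_div_eq {y : K} (h2 : (2 : K) ≠ 0) (hy : y ∈ twistedLine σ (σ b)) :
    σ (y / (2 * b)) + b * (y / (2 * b)) = y ∧ σ (y / (2 * b)) - b * (y / (2 * b)) = 0 := by
  have hb0 : b ≠ 0 := right_ne_zero_of_mul_eq_one hb
  have hσb0 : σ b ≠ 0 := left_ne_zero_of_mul_eq_one hb
  rw [mem_twistedLine] at hy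
  have hσ : σ (y / (2 * b)) = y / 2 := by
    rw [map_div₀, map_mul, map_ofNat, hy]
    field_simp
  have hmul : b * (y / (2 * b)) = y / 2 := by field_simp
  have : NeZero (2 : K) := ⟨h2⟩
  exact ⟨by rw [hσ, hmul, add_halves], by rw [hσ, hmul, sub_self]⟩

variable (hσ : ∀ x, σ (σ x) = x)
include hσ

theorem map_add_mul_mem_twistedLine (x : K) : σ x + b * x ∈ twistedLine σ (σ b) := by
  simp only [mem_twistedLine, map_add, map_mul, hσ]
  linear_combination (-x) * hb

theorem map_sub_mul_mem_twistedLine (x : K) : σ x - b * x ∈ twistedLine σ (-σ b) := by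
  simp only [mem_twistedLine, map_sub, map_mul, hσ]
  linear_combination (-x) * hb

theorem injective_iff_injOn_twistedLine (h2 : (2 : K) ≠ 0) {c : K}
    (hc : c ∈ twistedLine σ (σ b)) {G : K → K}
    (hGL : ∀ y ∈ twistedLine σ (σ b), G y ∈ twistedLine σ (σ b)) :
    Injective (fun x => G (σ x + b * x + c) + (σ x - b * x)) ↔
      Set.InjOn G (twistedLine σ (σ b)) := by
  have hb0 : b ≠ 0 := right_ne_zero_of_mul_eq_one hb
  have hσb0 : σ b ≠ 0 := left_ne_zero_of_mul_eq_one hb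
  have hAL : ∀ x, σ x + b * x + c ∈ twistedLine σ (σ b) := fun x =>
    add_mem (map_add_mul_mem_twistedLine hb hσ x) hc
  constructor
  · intro hinj y hy y' hy' hGy
    have hsection : ∀ z ∈ twistedLine σ (σ b),
        σ ((z - c) / (2 * b)) + b * ((z - c) / (2 * b)) + c = z ∧
          σ ((z - c) / (2 * b)) - b * ((z - c) / (2 * b)) = 0 := by
      intro z hz
      obtain ⟨hA, hB⟩ := map_add_mul_div_eq hb h2 (sub_mem hz hc)
      exact ⟨by rw [hA, sub_add_cancel], hB⟩
    have := @hinj ((y - c) / (2 * b)) ((y' - c) / (2 * b)) (by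
      simp only [(hsection y hy).1, (hsection y hy).2, (hsection y' hy').1, (hsection y' hy').2,
        hGy])
    simpa [hb0, h2] using this
  · intro hinj x x' hxx
    have hδ : G (σ x + b * x + c) - G (σ x' + b * x' + c) =
        (σ x' - b * x') - (σ x - b * x) := by
      linear_combination hxx
    have hδ0 : G (σ x + b * x + c) - G (σ x' + b * x' + c) = 0 := by
      refine eq_zero_of_mem_twistedLine_of_mem_neg h2 hσb0
        (sub_mem (hGL _ (hAL x)) (hGL _ (hAL x'))) ?_
      rw [hδ]
      exact sub_mem (map_sub_mul_mem_twistedLine hb hσ x') (map_sub_mul_mem_twistedLine hb hσ x)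
    have hA : σ x + b * x + c = σ x' + b * x' + c :=
      hinj (hAL x) (hAL x') (sub_eq_zero.mp hδ0)
    have : (2 * b) * x = (2 * b) * x' := by linear_combination hA - hδ + hδ0
    exact mul_left_cancel₀ (mul_ne_zero h2 hb0) this

end TwistedLine

section IndicatorScale

variable {K : Type*} [Field K] [DecidableEq K]

def indicatorScale (a : K) (s : ℕ) (y : K) : K := (if y ^ s = 1 then a else 0) * y - y

variable {a : K} {s : ℕ}

theorem indicatorScale_injective (hs : s ≠ 0) (h : (1 - a) ^ s = 1) :
    Injective (indicatorScale a s) := by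
  have ha : a - 1 ≠ 0 := by
    rintro ha
    rw [show 1 - a = 0 by linear_combination -ha, zero_pow hs] at h
    exact zero_ne_one h
  intro y y' hyy
  simp only [indicatorScale] at hyy
  by_cases hy : y ^ s = 1 <;> by_cases hy' : y' ^ s = 1 <;>
    simp only [hy, hy', if_true, if_false] at hyy
  · exact mul_left_cancel₀ ha (by linear_combination hyy)
  · refine absurd ?_ hy'
    rw [show y' = (1 - a) * y by linear_combination hyy, mul_pow, h, hy, one_mul]
  · refine absurd ?_ hy
    rw [show y = (1 - a) * y' by linear_combination -hyy, mul_pow, h, hy', one_mul]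
  · linear_combination -hyy

theorem indicatorScale_mul_eq (h : (1 - a) ^ s ≠ 1) {z : K} (hz : z ^ s = 1) :
    indicatorScale a s ((1 - a) * z) = indicatorScale a s z := by
  simp only [indicatorScale, mul_pow, hz, mul_one, h, if_false, if_true]
  ring

theorem injOn_indicatorScale_iff {S : Set K} (hs : s ≠ 0) (ha : a ≠ 0) {z : K} (hz : z ∈ S)
    (hz0 : z ≠ 0) (hzs : z ^ s = 1) (hmul : (1 - a) * z ∈ S) :
    Set.InjOn (indicatorScale a s) S ↔ (1 - a) ^ s = 1 := by
  refine ⟨fun hinj => ?_, fun h => (indicatorScale_injective hs h).injOn⟩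
  by_contra h
  have := hinj hmul hz (indicatorScale_mul_eq h hzs)
  exact mul_ne_zero ha hz0 (by linear_combination -this)

theorem sum_range_mul_pow_eq_indicatorScale {d s : ℕ} (e t b x c : K)
    (hy : (t + b * x + c) ^ (d * s + 1) = t + b * x + c) :
    (∑ k ∈ Finset.range d, e * (t + b * x + c) ^ (k * s + 1)) + (1 - e) * t - b * (1 + e) * x =
      e * indicatorScale (d : K) s (t + b * x + c) + e * c + (t - b * x) := by
  rw [← Finset.mul_sum, sum_range_pow_mul_add_one hy, indicatorScale]
  ring

theorem indicatorScale_mem_twistedLine {σ : K →+* K} (ha : σ a = a) {β y : K}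
    (hy : y ∈ twistedLine σ β) : indicatorScale a s y ∈ twistedLine σ β := by
  unfold indicatorScale
  split_ifs
  · exact sub_mem (mul_mem_twistedLine ha hy) hy
  · simpa using neg_mem hy

end IndicatorScale

section FiniteField

variable {F : Type*} [Field F] [Fintype F] {q : ℕ}

theorem exists_ringHom_eq_pow_of_card_eq_sq (hq : IsPrimePow q) (hF : Fintype.card F = q ^ 2) :
    ∃ σ : F →+* F, (∀ x, σ x = x ^ q) ∧ ∀ x, σ (σ x) = x := by
  obtain ⟨p, n, hp, -, rfl⟩ := hq
  have := Fact.mk (Nat.prime_iff.mpr hp)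
  have : CharP F p := charP_of_card_eq_prime_pow (f := n * 2) (by rw [hF, pow_mul])
  refine ⟨iterateFrobenius F p n, fun x => iterateFrobenius_def p n x, fun x => ?_⟩
  rw [iterateFrobenius_def, iterateFrobenius_def, ← pow_mul, ← sq, ← hF, FiniteField.pow_card]

theorem two_ne_zero_of_card_eq_sq (hF : Fintype.card F = q ^ 2) (hq : Odd q) : (2 : F) ≠ 0 := by
  refine Ring.two_ne_zero fun h => ?_
  have := FiniteField.even_card_iff_char_two.mp h
  rw [hF, ← Nat.even_iff] at this
  exact Nat.not_even_iff_odd.mpr hq.pow this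

theorem natCast_ne_zero_of_dvd_sub_one (hF : Fintype.card F = q ^ 2) {d : ℕ} (hd : d ∣ q - 1) :
    (d : F) ≠ 0 := by
  have hq : (q : F) = 0 := by
    have := FiniteField.cast_card_eq_zero F
    rwa [hF, Nat.cast_pow, pow_eq_zero_iff two_ne_zero] at this
  have hq1 : 1 ≤ q := Nat.pos_of_ne_zero (by rintro rfl; simp at hF)
  intro h
  have := Nat.cast_dvd_cast (α := F) hd
  rw [h, zero_dvd_iff, Nat.cast_sub hq1, hq, Nat.cast_one, zero_sub, neg_eq_zero] at this
  exact one_ne_zero this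

theorem exists_ne_zero_pow_eq_pow_mul_and_pow_eq_one (hF : Fintype.card F = q ^ 2) (hq : 2 ≤ q)
    {d : ℕ} (hd : d ∣ q - 1) (hcop : d.Coprime (q + 1)) {b : F} (hb : b ^ (q + 1) = 1) :
    ∃ y : F, y ≠ 0 ∧ y ^ q = b ^ q * y ∧ y ^ ((q ^ 2 - 1) / d) = 1 := by
  have hb0 : b ≠ 0 := by rintro rfl; simp at hb
  have hcard : Nat.card Fˣ = q ^ 2 - 1 := by
    rw [Nat.card_units, Nat.card_eq_fintype_card, hF]
  have hsq : q ^ 2 - 1 = (q + 1) * (q - 1) := by rw [← Nat.sq_sub_sq, one_pow]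
  have hgcd : Nat.card Fˣ / (Nat.card Fˣ).gcd (d * (q - 1)) = q + 1 := by
    rw [hcard, hsq, Nat.gcd_mul_right, Nat.Coprime.gcd_eq_one hcop.symm, one_mul,
      Nat.mul_div_cancel _ (by omega)]
  obtain ⟨z, hz⟩ := IsCyclic.exists_pow_eq_of_pow_eq_one_s15 (m := d * (q - 1))
    (w := Units.mk0 b hb0 ^ q) (by
      rw [hgcd, ← pow_mul, mul_comm, pow_mul]
      ext; simp [hb])
  have hzb : ((z ^ d : Fˣ) : F) ^ (q - 1) = b ^ q := by
    rw [← Units.val_pow_eq_pow_val, ← pow_mul, hz]; simp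
  refine ⟨(z ^ d : Fˣ), Units.ne_zero _, ?_, ?_⟩
  · rw [← pow_sub_one_mul (by omega), hzb]
  · rw [← Units.val_pow_eq_pow_val, ← pow_mul,
      Nat.mul_div_cancel' (hd.trans ⟨q + 1, by rw [hsq, mul_comm]⟩), ← hcard,
      pow_card_eq_one', Units.val_one]

end FiniteField

theorem stmt_15_general {F : Type*} [Field F] [Fintype F]
    (q : ℕ) (hq : IsPrimePow q) (hqodd : Odd q) (hF : Fintype.card F = q ^ 2)
    (d : ℕ) (hdodd : Odd d) (hdvd : d ∣ q - 1)
    (b c : F) (hb : b ^ (q + 1) = 1) (hc : c ^ q = b ^ q * c)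
    (e : F) (he : e ^ q = e) (he0 : e ≠ 0)
    (f : F → F)
    (hf : f = fun x => (∑ k ∈ Finset.range d,
      e * (x ^ q + b * x + c) ^ (k * ((q ^ 2 - 1) / d) + 1)) +
      (1 - e) * x ^ q - b * (1 + e) * x) :
    Function.Bijective f ↔ (1 - (d : F)) ^ ((q ^ 2 - 1) / d) = 1 := by
  classical
  obtain ⟨σ, hσ, hσσ⟩ := exists_ringHom_eq_pow_of_card_eq_sq hq hF
  have hσb : σ b * b = 1 := by rw [hσ, ← pow_succ, hb]
  have hmem : ∀ {y}, y ^ q = b ^ q * y → y ∈ twistedLine σ (σ b) := fun hy => by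
    rw [mem_twistedLine, hσ, hσ, hy]
  have he' : σ e = e := by rw [hσ, he]
  have hq2 := hq.two_le
  obtain ⟨z, hz0, hzL, hzs⟩ := exists_ne_zero_pow_eq_pow_mul_and_pow_eq_one hF hq2 hdvd
    (Nat.coprime_add_one_of_dvd_sub_one hdodd hdvd (by omega)) hb
  have hds := Nat.mul_div_sq_sub_one_add_one (by omega) hdvd
  set s := (q ^ 2 - 1) / d
  have hs0 : s ≠ 0 := by rintro h; rw [h] at hds; nlinarith
  have hf' : f = fun x => (e * indicatorScale (d : F) s (σ x + b * x + c) + e * c) +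
      (σ x - b * x) := by
    subst hf
    funext x
    rw [hσ, sum_range_mul_pow_eq_indicatorScale _ _ _ _ _
      (by rw [hds, ← hF, FiniteField.pow_card])]
  have hGL : ∀ y ∈ twistedLine σ (σ b),
      e * indicatorScale (d : F) s y + e * c ∈ twistedLine σ (σ b) := fun y hy =>
    add_mem (mul_mem_twistedLine he' (indicatorScale_mem_twistedLine (map_natCast σ d) hy))
      (mul_mem_twistedLine he' (hmem hc))
  rw [← Finite.injective_iff_bijective, hf',
    injective_iff_injOn_twistedLine hσb hσσ (two_ne_zero_of_card_eq_sq hF hqodd) (hmem hc) hGL,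
    injOn_mul_add_iff he0]
  exact injOn_indicatorScale_iff hs0 (natCast_ne_zero_of_dvd_sub_one hF hdvd) (hmem hzL) hz0 hzs
    (mul_mem_twistedLine (by rw [map_sub, map_one, map_natCast]) (hmem hzL))

theorem stmt_15 {F : Type*} [Field F] [Fintype F]
    (q : ℕ) (hq : IsPrimePow q) (hqodd : Odd q) (hF : Fintype.card F = q ^ 2)
    (d : ℕ) (hd3 : 3 ≤ d) (hdodd : Odd d) (hdvd : d ∣ q - 1)
    (b c : F) (hb : b ^ (q + 1) = 1) (hc : c ^ q = b ^ q * c)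
    (e : F) (he : e ^ q = e) (he0 : e ≠ 0)
    (f : F → F)
    (hf : f = fun x => (∑ k ∈ Finset.range d,
      e * (x ^ q + b * x + c) ^ (k * ((q ^ 2 - 1) / d) + 1)) +
      (1 - e) * x ^ q - b * (1 + e) * x) :
    Function.Bijective f ↔ (1 - (d : F)) ^ ((q ^ 2 - 1) / d) = 1 :=
  stmt_15_general q hq hqodd hF d hdodd hdvd b c hb hc e he he0 f hf
end

section
/- Let q be a prime power, let d be a positive divisor of q−1, let r be a positive integer, and let φ be a polynomial with coefficients in the subfield F_q of F_{q²}. Let a, b, c, u, v ∈ F_{q²} satisfy a·b ≠ 0, a^{q+1} = b^{q+1}, a·c^q = b^q·c, b·u ≠ a·v and B + A^{1−r}·B^{q·r} = 0. Then f(x) = (a·x^q + b·x + c)^r · φ((a·x^q + b·x + c)^{(q²−1)/d}) + u·x^q + v·x is a permutation polynomial of F_{q²} if and only if u^{q+1} ≠ v^{q+1}. -/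
/-!
Let σ be the Frobenius x ↦ x^q, an involutive automorphism of F_{q²}. The conditions on a, b, c
make h(x) = a x^q + b x + c an eigenvector of σ: σ (h x) = ε h x with ε = a^q / b and
ε^{q+1} = 1, so ε^{(q²-1)/d} = 1 and the first summand g of f satisfies σ (g x) = ε^r g x.
Hence σ (f x) - ε^r f x = α x + β σ x with α = u^q - ε^r v and β = v^q - ε^r u, and
since B^q = ε A the condition on B reads B + ε^r A = 0, that is a α = b β.
Moreover b (u^{q+1} - v^{q+1}) = α A. If α = 0 then β = 0, so every value y of f has
σ y = ε^r y, which cannot hold on all of F_{q²}. If α ≠ 0, then f x = f y forces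
b (x - y) + a σ (x - y) = 0, i.e. h x = h y, hence also u σ (x - y) + v (x - y) = 0,
and b u ≠ a v gives x = y.
-/

open Polynomial

theorem FiniteField.exists_ringHom_pow_eq_of_dvd_card {K : Type*} [Field K] [Fintype K] {q : ℕ}
    (hq : q ∣ Fintype.card K) : ∃ σ : K →+* K, ∀ x, σ x = x ^ q := by
  obtain ⟨n, hp, hcard⟩ := FiniteField.card K (ringChar K)
  rw [hcard] at hq
  obtain ⟨m, -, rfl⟩ := (Nat.dvd_prime_pow hp).1 hq
  have := Fact.mk hp
  exact ⟨iterateFrobenius K (ringChar K) m, fun _ => rfl⟩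

theorem FiniteField.exists_pow_ne_self_s16 {K : Type*} [Field K] [Fintype K] {n : ℕ} (hn : 1 < n)
    (hcard : n < Fintype.card K) : ∃ y : K, y ^ n ≠ y := by
  classical
  by_contra! h
  refine hcard.not_ge ?_
  calc Fintype.card K = (Finset.univ : Finset K).card := Finset.card_univ.symm
    _ ≤ (X ^ n - X : K[X]).natDegree := card_le_degree_of_subset_roots fun y _ => by
        simp [mem_roots (FiniteField.X_pow_card_sub_X_ne_zero K hn), h y]
    _ = n := FiniteField.X_pow_card_sub_X_natDegree_eq K hn

section CommSemiring

variable {R : Type*} [CommSemiring R] (σ : R →+* R) {φ : R[X]}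
  (hφ : ∀ i, σ (φ.coeff i) = φ.coeff i)
include hφ

theorem Polynomial.apply_eval_of_apply_coeff_eq (z : R) : σ (φ.eval z) = φ.eval (σ z) := by
  have : φ.map σ = φ := Polynomial.ext fun i => by rw [coeff_map, hφ]
  rw [← eval₂_at_apply, ← eval_map, this]

theorem apply_pow_mul_eval_pow {ε y : R} (hy : σ y = ε * y) {e : ℕ} (hε : ε ^ e = 1) (r : ℕ) :
    σ (y ^ r * φ.eval (y ^ e)) = ε ^ r * (y ^ r * φ.eval (y ^ e)) := by
  have hz : σ (y ^ e) = y ^ e := by rw [map_pow, hy, mul_pow, hε, one_mul]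
  rw [map_mul, apply_eval_of_apply_coeff_eq σ hφ, hz, map_pow, hy, mul_pow, mul_assoc]

end CommSemiring

section Involution

variable {F : Type*} [Field F] {σ : F →+* F} (hσ : ∀ x, σ (σ x) = x)

section Eigenvector

variable {a b : F} (hb : b ≠ 0) (hab : a * σ a = b * σ b)
include hσ hb hab

theorem div_mul_apply_div_eq_one : σ a / b * σ (σ a / b) = 1 := by
  have hσb : σ b ≠ 0 := (map_ne_zero σ).2 hb
  rw [map_div₀, hσ]
  field_simp
  linear_combination hab

theorem apply_add_add_eq_div_mul {c : F} (hac : a * σ c = σ b * c) (x : F) :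
    σ (a * σ x + b * x + c) = σ a / b * (a * σ x + b * x + c) := by
  have hca : σ a * c = b * σ c := by simpa [hσ] using congrArg σ hac
  simp only [map_add, map_mul, hσ]
  field_simp
  linear_combination (-σ x) * hab - hca

theorem apply_sub_eq_div_mul (u v : F) :
    σ (a * σ u - b * σ v) = σ a / b * (b * u - a * v) := by
  simp only [map_sub, map_mul, hσ]
  field_simp
  linear_combination v * hab

end Eigenvector

section Criterion

variable {a b c u v η : F} {G : F → F}
  (hG : ∀ x, σ (G (a * σ x + b * x + c)) = η * G (a * σ x + b * x + c))
include hσ hG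

theorem apply_sub_mul_eq (x : F) :
    σ (G (a * σ x + b * x + c) + u * σ x + v * x) - η * (G (a * σ x + b * x + c) + u * σ x + v * x)
      = (σ u - η * v) * x + (σ v - η * u) * σ x := by
  simp only [map_add, map_mul, hσ, hG]
  ring

theorem not_bijective_of_mul_apply_eq (hσ1 : ∃ y, σ y ≠ y) (hb : b ≠ 0) (hA : b * u ≠ a * v)
    (hη : a * σ u - b * σ v + η * (b * u - a * v) = 0) (huv : u * σ u = v * σ v) :
    ¬ Function.Bijective (fun x => G (a * σ x + b * x + c) + u * σ x + v * x) := by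
  intro hf
  have hα : σ u - η * v = 0 := by
    have : (σ u - η * v) * (b * u - a * v) = 0 := by linear_combination (-v) * hη + b * huv
    exact (mul_eq_zero.1 this).resolve_right (sub_ne_zero.2 hA)
  have hβ : σ v - η * u = 0 := by
    have : b * (σ v - η * u) = 0 := by linear_combination a * hα - hη
    exact (mul_eq_zero.1 this).resolve_left hb
  have hfix : ∀ y, σ y = η * y := fun y => by
    obtain ⟨x, rfl⟩ := hf.2 y
    beta_reduce
    linear_combination apply_sub_mul_eq hσ hG (u := u) (v := v) x + x * hα + σ x * hβ
  obtain ⟨y, hy⟩ := hσ1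
  have hη1 : η = 1 := by simpa using (hfix 1).symm
  exact hy (by rw [hfix, hη1, one_mul])

theorem injective_of_mul_apply_ne (hb : b ≠ 0) (hA : b * u ≠ a * v)
    (hη : a * σ u - b * σ v + η * (b * u - a * v) = 0) (huv : u * σ u ≠ v * σ v) :
    Function.Injective (fun x => G (a * σ x + b * x + c) + u * σ x + v * x) := by
  intro x y hxy
  simp only at hxy
  have hα : σ u - η * v ≠ 0 := by
    intro hα
    apply huv
    have : b * (u * σ u - v * σ v) = 0 := by linear_combination v * hη + (b * u - a * v) * hα
    linear_combination (mul_eq_zero.1 this).resolve_left hb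
  have hσxy : (σ u - η * v) * (x - y) + (σ v - η * u) * (σ x - σ y) = 0 := by
    linear_combination apply_sub_mul_eq hσ hG (u := u) (v := v) y
      - apply_sub_mul_eq hσ hG (u := u) (v := v) x + congrArg σ hxy - η * hxy
  have hbxy : b * (x - y) + a * (σ x - σ y) = 0 := by
    have : (σ u - η * v) * (b * (x - y) + a * (σ x - σ y)) = 0 := by
      linear_combination b * hσxy + (σ x - σ y) * hη
    exact (mul_eq_zero.1 this).resolve_left hα
  have hh : a * σ x + b * x + c = a * σ y + b * y + c := by linear_combination hbxy
  rw [hh] at hxy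
  have : (b * u - a * v) * (x - y) = 0 := by linear_combination u * hbxy - a * hxy
  exact sub_eq_zero.1 ((mul_eq_zero.1 this).resolve_left (sub_ne_zero.2 hA))

theorem bijective_iff_mul_apply_ne [Finite F] (hσ1 : ∃ y, σ y ≠ y) (hb : b ≠ 0)
    (hA : b * u ≠ a * v) (hη : a * σ u - b * σ v + η * (b * u - a * v) = 0) :
    Function.Bijective (fun x => G (a * σ x + b * x + c) + u * σ x + v * x) ↔
      u * σ u ≠ v * σ v :=
  ⟨fun hf huv => not_bijective_of_mul_apply_eq hσ hG hσ1 hb hA hη huv hf,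
    fun huv => Finite.injective_iff_bijective.1 (injective_of_mul_apply_ne hσ hG hb hA hη huv)⟩

end Criterion

end Involution

theorem stmt_16_general {F : Type*} [Field F] [Fintype F]
    (q : ℕ) (hF : Fintype.card F = q ^ 2)
    (d : ℕ) (hdvd : d ∣ q - 1)
    (r : ℕ)
    (φ : Polynomial F) (hφ : ∀ i : ℕ, (φ.coeff i) ^ q = φ.coeff i)
    (a b c u v : F) (hab : a * b ≠ 0)
    (hab1 : a ^ (q + 1) = b ^ (q + 1)) (hac : a * c ^ q = b ^ q * c)
    (hA0 : b * u ≠ a * v)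
    (A B : F) (hA : A = b * u - a * v) (hB : B = a * u ^ q - b * v ^ q)
    (hB0 : B + A * (A ^ r)⁻¹ * B ^ (q * r) = 0)
    (f : F → F)
    (hf : f = fun x => (a * x ^ q + b * x + c) ^ r *
      φ.eval ((a * x ^ q + b * x + c) ^ ((q ^ 2 - 1) / d)) + u * x ^ q + v * x) :
    Function.Bijective f ↔ u ^ (q + 1) ≠ v ^ (q + 1) := by
  obtain ⟨σ, hσ⟩ := FiniteField.exists_ringHom_pow_eq_of_dvd_card (hF ▸ dvd_pow_self q two_ne_zero)
  have hσσ : ∀ x, σ (σ x) = x := fun x => by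
    rw [hσ, hσ, ← pow_mul, ← sq, ← hF, FiniteField.pow_card]
  have hq : 1 < q := (one_lt_pow_iff two_ne_zero).1 (hF ▸ Fintype.one_lt_card)
  have hσ1 : ∃ y, σ y ≠ y := by
    simpa only [hσ] using FiniteField.exists_pow_ne_self_s16 hq (hF ▸ lt_self_pow₀ hq one_lt_two)
  simp only [pow_succ', ← hσ] at hab1 ⊢
  simp only [← hσ] at hφ hac hB hf
  subst hf hA hB
  have hb : b ≠ 0 := right_ne_zero_of_mul hab
  set ε := σ a / b
  have hε : ε ^ ((q ^ 2 - 1) / d) = 1 := by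
    have hε1 : ε ^ (q + 1) = 1 := by
      rw [pow_succ', ← hσ, div_mul_apply_div_eq_one hσσ hb hab1]
    rw [← one_pow 2, Nat.sq_sub_sq, Nat.mul_div_assoc _ hdvd, pow_mul, hε1, one_pow]
  have hη : a * σ u - b * σ v + ε ^ r * (b * u - a * v) = 0 := by
    have hA : b * u - a * v ≠ 0 := sub_ne_zero.2 hA0
    rw [pow_mul, ← hσ, apply_sub_eq_div_mul hσσ hb hab1, mul_pow] at hB0
    field_simp at hB0
    linear_combination hB0
  exact bijective_iff_mul_apply_ne hσσ (G := fun y => y ^ r * φ.eval (y ^ ((q ^ 2 - 1) / d)))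
    (fun x => apply_pow_mul_eval_pow σ hφ (apply_add_add_eq_div_mul hσσ hb hab1 hac x) hε r)
    hσ1 hb hA0 hη

theorem stmt_16 {F : Type*} [Field F] [Fintype F]
    (q : ℕ) (hq : IsPrimePow q) (hF : Fintype.card F = q ^ 2)
    (d : ℕ) (hd0 : 0 < d) (hdvd : d ∣ q - 1)
    (r : ℕ) (hr : 0 < r)
    (φ : Polynomial F) (hφ : ∀ i : ℕ, (φ.coeff i) ^ q = φ.coeff i)
    (a b c u v : F) (hab : a * b ≠ 0)
    (hab1 : a ^ (q + 1) = b ^ (q + 1)) (hac : a * c ^ q = b ^ q * c)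
    (hA0 : b * u ≠ a * v)
    (A B : F) (hA : A = b * u - a * v) (hB : B = a * u ^ q - b * v ^ q)
    (hB0 : B + A * (A ^ r)⁻¹ * B ^ (q * r) = 0)
    (f : F → F)
    (hf : f = fun x => (a * x ^ q + b * x + c) ^ r *
      φ.eval ((a * x ^ q + b * x + c) ^ ((q ^ 2 - 1) / d)) + u * x ^ q + v * x) :
    Function.Bijective f ↔ u ^ (q + 1) ≠ v ^ (q + 1) :=
  stmt_16_general q hF d hdvd r φ hφ a b c u v hab hab1 hac hA0 A B hA hB hB0 f hf
end
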